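/- arXiv:0711.3664 — 4 statements merged into one kernel-verified Lean document; each statement's English description precedes it below -/
import Mathlib

section
/- Let C > 1 and ε = min{C−1, 1/3}. There exists Δ₀ = Δ₀(ε) such that for every integer Δ > Δ₀ and every integer k > CΔ/ln Δ the following holds: for every ℓ ≥ 1, every allowed unbiasing partial coloring X of the leaves L_ℓ, and every color c ∈ [k], P_ℓ(X,c) ≤ Δ^{−ε/2}. -/
/-- Vertices of the complete rooted tree of depth `ℓ` and branching factor `Δ`:
a vertex is the path leading to it from the root, i.e. a pair of a depth `i ≤ ℓ`
and a function `Fin i → Fin Δ`. -/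
abbrev TVertex (Δ ℓ : ℕ) : Type := Σ i : Fin (ℓ + 1), Fin i.val → Fin Δ

/-- The root of the tree. -/
def troot (Δ ℓ : ℕ) : TVertex Δ ℓ := ⟨⟨0, Nat.succ_pos ℓ⟩, fun i => i.elim0⟩

/-- The `j`-th child of a vertex `v` of depth `< ℓ`. -/
def tchild {Δ ℓ : ℕ} (v : TVertex Δ ℓ) (h : v.1.val < ℓ) (j : Fin Δ) : TVertex Δ ℓ :=
  ⟨⟨v.1.val + 1, Nat.succ_lt_succ h⟩, Fin.snoc v.2 j⟩

/-- A proper `k`-coloring of the tree: adjacent (parent/child) vertices get distinct colors. -/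
def ProperColoring (Δ ℓ k : ℕ) (σ : TVertex Δ ℓ → Fin k) : Prop :=
  ∀ (v : TVertex Δ ℓ) (h : v.1.val < ℓ) (j : Fin Δ), σ v ≠ σ (tchild v h j)

/-- The leaf determined by a root-to-leaf path. -/
def leafVertex {Δ ℓ : ℕ} (f : Fin ℓ → Fin Δ) : TVertex Δ ℓ := ⟨⟨ℓ, Nat.lt_succ_self ℓ⟩, f⟩

/-- Restriction of a coloring of the tree to the leaves. -/
def leafColoring {Δ ℓ k : ℕ} (σ : TVertex Δ ℓ → Fin k) : (Fin ℓ → Fin Δ) → Fin k :=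
  fun f => σ (leafVertex f)

/-- A total leaf coloring, viewed as a partial one (no `⋆`s). -/
def toPartial {Δ ℓ k : ℕ} (X : (Fin ℓ → Fin Δ) → Fin k) : (Fin ℓ → Fin Δ) → Option (Fin k) :=
  fun f => some (X f)

/-- Probability of the event `E` under the uniform measure `μ_ℓ` on proper colorings. -/
noncomputable def treeProb (Δ ℓ k : ℕ) (E : (TVertex Δ ℓ → Fin k) → Prop) : ℝ :=
  (Nat.card {σ : TVertex Δ ℓ → Fin k // ProperColoring Δ ℓ k σ ∧ E σ} : ℝ) /
    (Nat.card {σ : TVertex Δ ℓ → Fin k // ProperColoring Δ ℓ k σ} : ℝ)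

/-- Expectation of `f` under the uniform measure `μ_ℓ` on proper colorings. -/
noncomputable def treeExp (Δ ℓ k : ℕ) (f : (TVertex Δ ℓ → Fin k) → ℝ) : ℝ :=
  (∑ σ : TVertex Δ ℓ → Fin k, Set.indicator {σ | ProperColoring Δ ℓ k σ} f σ) /
    (Nat.card {σ : TVertex Δ ℓ → Fin k // ProperColoring Δ ℓ k σ} : ℝ)

/-- `σ` agrees with the partial leaf coloring `X` on every leaf colored by `X`. -/
def AgreesOn {Δ ℓ k : ℕ} (σ : TVertex Δ ℓ → Fin k) (X : (Fin ℓ → Fin Δ) → Option (Fin k)) : Prop :=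
  ∀ (f : Fin ℓ → Fin Δ) (c : Fin k), X f = some c → leafColoring σ f = c

/-- `X` is an allowed partial coloring of the leaves. -/
def AllowedP (Δ ℓ k : ℕ) (X : (Fin ℓ → Fin Δ) → Option (Fin k)) : Prop :=
  ∃ σ, ProperColoring Δ ℓ k σ ∧ AgreesOn σ X

/-- `μ_ℓ(σ(root) = c | σ` agrees with `X` at the leaves`)`. -/
noncomputable def condProbRootP (Δ ℓ k : ℕ) (X : (Fin ℓ → Fin Δ) → Option (Fin k))
    (c : Fin k) : ℝ :=
  (Nat.card {σ : TVertex Δ ℓ → Fin k //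
      ProperColoring Δ ℓ k σ ∧ AgreesOn σ X ∧ σ (troot Δ ℓ) = c} : ℝ) /
    (Nat.card {σ : TVertex Δ ℓ → Fin k // ProperColoring Δ ℓ k σ ∧ AgreesOn σ X} : ℝ)

/-- Restriction of a vector indexed by the leaves of `T_{ℓ+1}` to the leaves below
the `j`-th child of the root. -/
def childRestrict {Δ ℓ : ℕ} {β : Sort*} (X : (Fin (ℓ + 1) → Fin Δ) → β) (j : Fin Δ) :
    (Fin ℓ → Fin Δ) → β := fun g => X (Fin.cons j g)

/-- The recursively defined quantity `P_h(X, c)`. -/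
noncomputable def Pfun (Δ k : ℕ) : (h : ℕ) → ((Fin h → Fin Δ) → Option (Fin k)) → Fin k → ℝ
  | 0, X, c =>
    match X (fun i => i.elim0) with
    | none => 1 / (k : ℝ)
    | some d => if d = c then 1 else 0
  | h + 1, X, c =>
    (∏ j : Fin Δ, (1 - Pfun Δ k h (childRestrict X j) c)) /
      ∑ d : Fin k, ∏ j : Fin Δ, (1 - Pfun Δ k h (childRestrict X j) d)

/-- Unbiasing partial colorings of the leaves of `T_ℓ` (meaningful for `ℓ ≥ 1`). -/
def Unbiasing (Δ k : ℕ) (ε : ℝ) : (ℓ : ℕ) → ((Fin ℓ → Fin Δ) → Option (Fin k)) → Prop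
  | 0, _ => True
  | 1, X => (Δ : ℝ) ^ (ε / 2) ≤ (Nat.card {c : Fin k // ∀ f, X f ≠ some c} : ℝ)
  | ℓ + 2, X =>
      (Nat.card {j : Fin Δ // ¬ Unbiasing Δ k ε (ℓ + 1) (childRestrict X j)} : ℝ) ≤
        (Δ : ℝ) ^ ((1 : ℝ) - ε)

/-- Auxiliary notion: every subtree vertex of height `≥ t` has an unbiasing restriction. -/
def HighlyUnbiasingAux (Δ k : ℕ) (ε t : ℝ) :
    (h : ℕ) → ((Fin h → Fin Δ) → Option (Fin k)) → Prop
  | 0, _ => True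
  | h + 1, X => ((t ≤ (h : ℝ) + 1) → Unbiasing Δ k ε (h + 1) X) ∧
      ∀ j : Fin Δ, HighlyUnbiasingAux Δ k ε t h (childRestrict X j)

/-- Highly unbiasing partial colorings of the leaves of `T_ℓ`: the restriction to the
leaves below `v` is unbiasing for every vertex `v` at distance `≥ εℓ` from the leaves. -/
def HighlyUnbiasing (Δ k : ℕ) (ε : ℝ) (ℓ : ℕ) (X : (Fin ℓ → Fin Δ) → Option (Fin k)) : Prop :=
  HighlyUnbiasingAux Δ k ε (ε * ℓ) ℓ X

/-- `μ↓_{c,ℓ}`: the distribution of the leaf coloring conditioned on the root color `c`. -/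
noncomputable def downDist (Δ ℓ k : ℕ) (c : Fin k) (X : (Fin ℓ → Fin Δ) → Fin k) : ℝ :=
  (Nat.card {σ : TVertex Δ ℓ → Fin k //
      ProperColoring Δ ℓ k σ ∧ σ (troot Δ ℓ) = c ∧ leafColoring σ = X} : ℝ) /
    (Nat.card {σ : TVertex Δ ℓ → Fin k // ProperColoring Δ ℓ k σ ∧ σ (troot Δ ℓ) = c} : ℝ)

/-- `μ↑_{X,ℓ}`: the distribution of the root color given the (total) leaf coloring `X`. -/
noncomputable def upDist (Δ ℓ k : ℕ) (X : (Fin ℓ → Fin Δ) → Fin k) (c : Fin k) : ℝ :=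
  condProbRootP Δ ℓ k (toPartial X) c

/-- `μ↓↑_{c,ℓ}`: sample leaves from `μ↓_{c,ℓ}`, then a root color from `μ↑`. -/
noncomputable def downUp (Δ ℓ k : ℕ) (c c' : Fin k) : ℝ :=
  ∑ X : (Fin ℓ → Fin Δ) → Fin k, downDist Δ ℓ k c X * upDist Δ ℓ k X c'

/-- Hamming distance between two leaf colorings. -/
noncomputable def leafHamming {Δ ℓ k : ℕ} (X Y : (Fin ℓ → Fin Δ) → Fin k) : ℕ :=
  Nat.card {f : Fin ℓ → Fin Δ // X f ≠ Y f}

/-- Total variation distance between two distributions on `Fin k`. -/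
noncomputable def tvDist {k : ℕ} (p q : Fin k → ℝ) : ℝ :=
  (∑ c : Fin k, |p c - q c|) / 2

/-- `ν` is a coupling of the distributions `p` and `q`. -/
def IsCoupling {α β : Type*} [Fintype α] [Fintype β] (ν : α × β → ℝ)
    (p : α → ℝ) (q : β → ℝ) : Prop :=
  (∀ z, 0 ≤ ν z) ∧ (∀ x, ∑ y : β, ν (x, y) = p x) ∧ (∀ y, ∑ x : α, ν (x, y) = q y)

/-!
`P_ℓ(X, ·)` normalises `N(d) = ∏_j (1 - p_j(d))`, where `p_j = P_{ℓ-1}(X_j, ·)` are the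
children's vectors. Since `N(c) ≤ 1`, it suffices to bound the normaliser `∑_d N(d)` from below.

At depth one each `p_j` is uniform or a point mass, so every color `d` missing from `X` has
`N(d) ≥ N(c)`, and `P_1(X, c)` is at most one over the number of missing colors.

At larger depth, by induction all but `Δ^{1-ε}` children have `p_j ≤ δ := Δ^{-ε/2}`, and for
them `1 - x ≥ exp(-(1 + 2δ)x)`. The bad children carry total mass at most `Δ^{1-ε}`, so for at
least `m ≥ k - 2Δ^{1-ε}` colors their factor is at least `1/2`. Jensen's inequality for `exp`
over these colors, whose total good mass is at most `Δ`, gives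
`∑_d N(d) ≥ (m/2) exp(-(1 + 2δ)Δ/m)`. As `m ≈ CΔ / log Δ`, the resulting bound on `P_ℓ(X, c)` is
about `Δ^{1/C - 1} log Δ`, which is below `δ` because `1/C + ε/2 < 1`.
-/

open Finset Real Filter Topology

lemma one_sub_sum_le_prod_one_sub {ι : Type*} {s : Finset ι} {f : ι → ℝ}
    (h0 : ∀ i ∈ s, 0 ≤ f i) (h1 : ∀ i ∈ s, f i ≤ 1) :
    1 - ∑ i ∈ s, f i ≤ ∏ i ∈ s, (1 - f i) := by
  induction s using Finset.cons_induction with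
  | empty => simp
  | cons a s _ ih =>
    rw [prod_cons, sum_cons]
    have hs := ih (fun i hi => h0 i (mem_cons_of_mem hi)) (fun i hi => h1 i (mem_cons_of_mem hi))
    have hs0 : 0 ≤ ∑ i ∈ s, f i := sum_nonneg fun i hi => h0 i (mem_cons_of_mem hi)
    have ha0 := h0 a (mem_cons_self a s)
    have ha1 := h1 a (mem_cons_self a s)
    nlinarith [mul_le_mul_of_nonneg_left hs (sub_nonneg.2 ha1)]

lemma exp_neg_mul_le_one_sub {x δ : ℝ} (hx : 0 ≤ x) (hxδ : x ≤ δ) (hδ : δ ≤ 1 / 2) :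
    exp (-((1 + 2 * δ) * x)) ≤ 1 - x := by
  have hx1 : 0 < 1 - x := by linarith
  -- `log (1 - x) ≥ -x / (1 - x)` and `1 / (1 - x) ≤ 1 + 2x` for `x ≤ 1/2`
  have hlin : -((1 + 2 * δ) * x) ≤ 1 - (1 - x)⁻¹ := by
    rw [show 1 - (1 - x)⁻¹ = -(x / (1 - x)) by field_simp; ring, neg_le_neg_iff,
      div_le_iff₀ hx1]
    nlinarith [mul_nonneg hx (sub_nonneg.2 hxδ),
      mul_nonneg hx (mul_nonneg hx (by linarith : 0 ≤ 1 - 2 * δ))]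
  calc exp (-((1 + 2 * δ) * x)) ≤ exp (log (1 - x)) :=
        exp_le_exp.2 (hlin.trans (one_sub_inv_le_log_of_pos hx1))
    _ = 1 - x := exp_log hx1

lemma mul_exp_neg_div_le_sum_exp {ι : Type*} {s : Finset ι} (a : ι → ℝ) {A m : ℝ}
    (hA : ∑ i ∈ s, a i ≤ A) (hA0 : 0 ≤ A) (hm : 0 < m) (hms : m ≤ #s) :
    m * exp (-(A / m)) ≤ ∑ i ∈ s, exp (-a i) := by
  have hs : (0 : ℝ) < #s := hm.trans_le hms
  have hjensen := convexOn_exp.map_sum_le (t := s) (w := fun _ => (#s : ℝ)⁻¹) (p := fun i => -a i)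
    (fun _ _ => by positivity) (by simp [hs.ne']) (fun _ _ => Set.mem_univ _)
  simp only [smul_eq_mul, ← mul_sum, sum_neg_distrib] at hjensen
  calc m * exp (-(A / m)) ≤ #s * exp (-(A / #s)) := by gcongr
    _ ≤ #s * exp ((#s : ℝ)⁻¹ * -∑ i ∈ s, a i) := by
        gcongr
        rw [mul_neg, neg_le_neg_iff, inv_mul_eq_div]
        gcongr
    _ ≤ #s * ((#s : ℝ)⁻¹ * ∑ i ∈ s, exp (-a i)) := by gcongr
    _ = ∑ i ∈ s, exp (-a i) := by field_simp

lemma le_one_of_sum_le_one {κ : Type*} [Fintype κ] {p : κ → ℝ} (hp0 : ∀ d, 0 ≤ p d)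
    (hp1 : ∑ d, p d ≤ 1) (c : κ) : p c ≤ 1 :=
  (single_le_sum (fun d _ => hp0 d) (mem_univ c)).trans hp1

lemma card_sub_two_mul_le_card_filter {κ : Type*} [Fintype κ] {b : κ → ℝ} (hb : ∀ d, 0 ≤ b d)
    {B : ℝ} (hB : ∑ d, b d ≤ B) : (Fintype.card κ : ℝ) - 2 * B ≤ #{d | b d ≤ 1 / 2} := by
  have hsplit := card_filter_add_card_filter_not (s := univ) (fun d => b d ≤ 1 / 2)
  have hmarkov : (#{d | ¬b d ≤ 1 / 2} : ℝ) * (1 / 2) ≤ ∑ d, b d := by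
    rw [← nsmul_eq_mul]
    exact (card_nsmul_le_sum _ _ _ fun d hd => le_of_not_ge (mem_filter.1 hd).2).trans
      (sum_le_univ_sum_of_nonneg hb)
  rw [card_univ] at hsplit
  rw [← hsplit]
  push_cast
  linarith

lemma exp_neg_div_two_le_prod_one_sub {ι : Type*} [Fintype ι] [DecidableEq ι] {q : ι → ℝ}
    (hq0 : ∀ j, 0 ≤ q j) (hq1 : ∀ j, q j ≤ 1) {δ : ℝ} (hδ : δ ≤ 1 / 2) (bad : Finset ι)
    (hbad : ∑ j ∈ bad, q j ≤ 1 / 2) (hgood : ∀ j ∉ bad, q j ≤ δ) :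
    exp (-((1 + 2 * δ) * ∑ j ∈ badᶜ, q j)) / 2 ≤ ∏ j, (1 - q j) := by
  have hbad' : 1 / 2 ≤ ∏ j ∈ bad, (1 - q j) :=
    (by linarith : (1 : ℝ) / 2 ≤ 1 - ∑ j ∈ bad, q j).trans
      (one_sub_sum_le_prod_one_sub (fun j _ => hq0 j) (fun j _ => hq1 j))
  have hgood' : exp (-((1 + 2 * δ) * ∑ j ∈ badᶜ, q j)) ≤ ∏ j ∈ badᶜ, (1 - q j) := by
    rw [mul_sum, ← sum_neg_distrib, exp_sum]
    exact prod_le_prod (fun _ _ => (exp_pos _).le) fun j hj =>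
      exp_neg_mul_le_one_sub (hq0 j) (hgood j (mem_compl.1 hj)) hδ
  rw [← prod_mul_prod_compl bad, div_eq_mul_one_div, mul_comm]
  exact mul_le_mul hbad' hgood' (exp_pos _).le ((by norm_num : (0 : ℝ) ≤ 1 / 2).trans hbad')

section RootUpdate

variable {ι κ : Type*} [Fintype ι] [Fintype κ]

noncomputable def rootUpdate (p : ι → κ → ℝ) (c : κ) : ℝ :=
  (∏ j, (1 - p j c)) / ∑ d, ∏ j, (1 - p j d)

lemma rootUpdate_nonneg {p : ι → κ → ℝ} (hp : ∀ j d, p j d ≤ 1) (c : κ) :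
    0 ≤ rootUpdate p c :=
  div_nonneg (prod_nonneg fun j _ => sub_nonneg.2 (hp j c))
    (sum_nonneg fun d _ => prod_nonneg fun j _ => sub_nonneg.2 (hp j d))

lemma sum_rootUpdate_le_one (p : ι → κ → ℝ) : ∑ c, rootUpdate p c ≤ 1 := by
  simp only [rootUpdate, ← sum_div]
  exact div_self_le_one _

lemma card_mul_rootUpdate_le_one {p : ι → κ → ℝ} (hp : ∀ j d, p j d ≤ 1) {c : κ} (M : Finset κ)
    (hM : ∀ d ∈ M, ∀ j, p j d ≤ p j c) : #M * rootUpdate p c ≤ 1 := by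
  have hN : ∀ d, 0 ≤ ∏ j, (1 - p j d) := fun d => prod_nonneg fun j _ => sub_nonneg.2 (hp j d)
  have hcard : #M * ∏ j, (1 - p j c) ≤ ∑ d, ∏ j, (1 - p j d) :=
    calc #M * ∏ j, (1 - p j c) = ∑ d ∈ M, ∏ j, (1 - p j c) := by simp
      _ ≤ ∑ d ∈ M, ∏ j, (1 - p j d) := sum_le_sum fun d hd =>
          prod_le_prod (fun j _ => sub_nonneg.2 (hp j c)) fun j _ => by linarith [hM d hd j]
      _ ≤ ∑ d, ∏ j, (1 - p j d) := sum_le_univ_sum_of_nonneg hN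
  rw [rootUpdate, mul_div_assoc']
  exact div_le_one_of_le₀ hcard (sum_nonneg fun d _ => hN d)

lemma mul_exp_div_two_le_sum_prod_one_sub {p : ι → κ → ℝ} (hp0 : ∀ j d, 0 ≤ p j d)
    (hp1 : ∀ j, ∑ d, p j d ≤ 1) {δ B m : ℝ} (hδ0 : 0 ≤ δ) (hδ : δ ≤ 1 / 2) (bad : Finset ι)
    (hbad : #bad ≤ B) (hgood : ∀ j ∉ bad, ∀ d, p j d ≤ δ) (hm : 0 < m)
    (hmκ : m ≤ Fintype.card κ - 2 * B) :
    m * exp (-((1 + 2 * δ) * Fintype.card ι / m)) / 2 ≤ ∑ d, ∏ j, (1 - p j d) := by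
  classical
  set S : Finset κ := {d | ∑ j ∈ bad, p j d ≤ 1 / 2}
  have hmS : m ≤ #S := hmκ.trans <| card_sub_two_mul_le_card_filter
    (fun d => sum_nonneg fun j _ => hp0 j d) <| by
      rw [sum_comm]
      exact (sum_le_sum fun j _ => hp1 j).trans (by simpa using hbad)
  have hmass : ∑ d ∈ S, (1 + 2 * δ) * ∑ j ∈ badᶜ, p j d ≤ (1 + 2 * δ) * Fintype.card ι := by
    rw [← mul_sum]
    gcongr
    calc ∑ d ∈ S, ∑ j ∈ badᶜ, p j d ≤ ∑ d, ∑ j ∈ badᶜ, p j d :=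
          sum_le_univ_sum_of_nonneg fun d => sum_nonneg fun j _ => hp0 j d
      _ = ∑ j ∈ badᶜ, ∑ d, p j d := sum_comm
      _ ≤ ∑ j ∈ badᶜ, 1 := sum_le_sum fun j _ => hp1 j
      _ ≤ Fintype.card ι := by simpa using card_le_univ badᶜ
  calc m * exp (-((1 + 2 * δ) * Fintype.card ι / m)) / 2
      ≤ (∑ d ∈ S, exp (-((1 + 2 * δ) * ∑ j ∈ badᶜ, p j d))) / 2 := by
        gcongr
        exact mul_exp_neg_div_le_sum_exp _ hmass (by positivity) hm hmS
    _ = ∑ d ∈ S, exp (-((1 + 2 * δ) * ∑ j ∈ badᶜ, p j d)) / 2 := sum_div ..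
    _ ≤ ∑ d ∈ S, ∏ j, (1 - p j d) := sum_le_sum fun d hd =>
        exp_neg_div_two_le_prod_one_sub (fun j => hp0 j d)
          (fun j => le_one_of_sum_le_one (hp0 j) (hp1 j) d) hδ bad (mem_filter.1 hd).2
          fun j hj => hgood j hj d
    _ ≤ ∑ d, ∏ j, (1 - p j d) := sum_le_univ_sum_of_nonneg fun d =>
        prod_nonneg fun j _ => sub_nonneg.2 (le_one_of_sum_le_one (hp0 j) (hp1 j) d)

lemma rootUpdate_le_of_card_bad_le {p : ι → κ → ℝ} (hp0 : ∀ j d, 0 ≤ p j d)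
    (hp1 : ∀ j, ∑ d, p j d ≤ 1) {δ B m : ℝ} (hδ0 : 0 ≤ δ) (hδ : δ ≤ 1 / 2) (bad : Finset ι)
    (hbad : #bad ≤ B) (hgood : ∀ j ∉ bad, ∀ d, p j d ≤ δ) (hm : 0 < m)
    (hmκ : m ≤ Fintype.card κ - 2 * B) (c : κ) :
    rootUpdate p c ≤ 2 * exp ((1 + 2 * δ) * Fintype.card ι / m) / m := by
  have hnum : ∏ j, (1 - p j c) ≤ 1 := prod_le_one
    (fun j _ => sub_nonneg.2 (le_one_of_sum_le_one (hp0 j) (hp1 j) c))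
    fun j _ => by linarith [hp0 j c]
  calc rootUpdate p c ≤ 1 / (m * exp (-((1 + 2 * δ) * Fintype.card ι / m)) / 2) :=
        div_le_div₀ zero_le_one hnum (by positivity)
          (mul_exp_div_two_le_sum_prod_one_sub hp0 hp1 hδ0 hδ bad hbad hgood hm hmκ)
    _ = 2 * exp ((1 + 2 * δ) * Fintype.card ι / m) / m := by
        rw [exp_neg]
        field_simp

end RootUpdate

section Pfun

variable {Δ k : ℕ}

lemma Pfun_succ (h : ℕ) (X : (Fin (h + 1) → Fin Δ) → Option (Fin k)) (c : Fin k) :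
    Pfun Δ k (h + 1) X c = rootUpdate (fun j => Pfun Δ k h (childRestrict X j)) c :=
  rfl

lemma Pfun_nonneg_and_sum_le_one (h : ℕ) (X : (Fin h → Fin Δ) → Option (Fin k)) :
    (∀ c, 0 ≤ Pfun Δ k h X c) ∧ ∑ c, Pfun Δ k h X c ≤ 1 := by
  induction h with
  | zero =>
    unfold Pfun
    rcases X fun i => i.elim0 with _ | d
    · refine ⟨fun _ => by positivity, ?_⟩
      rcases Nat.eq_zero_or_pos k with rfl | hk
      · simp
      · simp [hk.ne']
    · refine ⟨fun c => ?_, by simp⟩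
      dsimp only
      split_ifs <;> norm_num
  | succ h ih =>
    refine ⟨fun c => ?_, sum_rootUpdate_le_one _⟩
    exact rootUpdate_nonneg (fun j d =>
      le_one_of_sum_le_one (ih (childRestrict X j)).1 (ih (childRestrict X j)).2 d) c

lemma Pfun_nonneg (h : ℕ) (X : (Fin h → Fin Δ) → Option (Fin k)) (c : Fin k) :
    0 ≤ Pfun Δ k h X c :=
  (Pfun_nonneg_and_sum_le_one h X).1 c

lemma sum_Pfun_le_one (h : ℕ) (X : (Fin h → Fin Δ) → Option (Fin k)) :
    ∑ c, Pfun Δ k h X c ≤ 1 :=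
  (Pfun_nonneg_and_sum_le_one h X).2

lemma Pfun_le_one (h : ℕ) (X : (Fin h → Fin Δ) → Option (Fin k)) (c : Fin k) :
    Pfun Δ k h X c ≤ 1 :=
  le_one_of_sum_le_one (Pfun_nonneg h X) (sum_Pfun_le_one h X) c

lemma Pfun_zero_le_of_ne_some {Y : (Fin 0 → Fin Δ) → Option (Fin k)} {d : Fin k}
    (hd : Y (fun i => i.elim0) ≠ some d) (c : Fin k) : Pfun Δ k 0 Y d ≤ Pfun Δ k 0 Y c := by
  unfold Pfun
  rcases hY : Y fun i => i.elim0 with _ | e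
  · rfl
  · have hed : e ≠ d := fun h => hd (h ▸ hY)
    dsimp only
    split_ifs <;> simp_all

lemma card_missing_mul_Pfun_one_le_one (X : (Fin 1 → Fin Δ) → Option (Fin k)) (c : Fin k) :
    Nat.card {d : Fin k // ∀ f, X f ≠ some d} * Pfun Δ k 1 X c ≤ 1 := by
  classical
  rw [Nat.card_eq_fintype_card, Fintype.card_subtype, Pfun_succ]
  exact card_mul_rootUpdate_le_one (Pfun_le_one 0 <| childRestrict X ·) _
    fun d hd j => Pfun_zero_le_of_ne_some ((mem_filter.1 hd).2 _) c

lemma Pfun_one_le_of_unbiasing {ε : ℝ} (hΔ : 0 < Δ) {X : (Fin 1 → Fin Δ) → Option (Fin k)}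
    (hU : Unbiasing Δ k ε 1 X) (c : Fin k) : Pfun Δ k 1 X c ≤ (Δ : ℝ) ^ (-(ε / 2)) := by
  have hU : (Δ : ℝ) ^ (ε / 2) ≤ Nat.card {d : Fin k // ∀ f, X f ≠ some d} := hU
  have hpos : (0 : ℝ) < (Δ : ℝ) ^ (ε / 2) := by positivity
  rw [rpow_neg (Nat.cast_nonneg Δ), ← one_div, le_div_iff₀ hpos, mul_comm]
  exact (mul_le_mul_of_nonneg_right hU (Pfun_nonneg 1 X c)).trans
    (card_missing_mul_Pfun_one_le_one X c)

lemma Pfun_succ_succ_le_of_unbiasing {ε δ m : ℝ} {n : ℕ} (hδ0 : 0 ≤ δ) (hδ : δ ≤ 1 / 2)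
    (hm : 0 < m) (hmk : m ≤ k - 2 * (Δ : ℝ) ^ ((1 : ℝ) - ε))
    {X : (Fin (n + 2) → Fin Δ) → Option (Fin k)} (hU : Unbiasing Δ k ε (n + 2) X)
    (ih : ∀ j, Unbiasing Δ k ε (n + 1) (childRestrict X j) →
      ∀ d, Pfun Δ k (n + 1) (childRestrict X j) d ≤ δ) (c : Fin k) :
    Pfun Δ k (n + 2) X c ≤ 2 * exp ((1 + 2 * δ) * Δ / m) / m := by
  classical
  have hbad : (#{j | ¬Unbiasing Δ k ε (n + 1) (childRestrict X j)} : ℝ) ≤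
      (Δ : ℝ) ^ ((1 : ℝ) - ε) := by
    rw [← Fintype.card_subtype, ← Nat.card_eq_fintype_card]
    exact hU
  rw [Pfun_succ]
  simpa using rootUpdate_le_of_card_bad_le (Pfun_nonneg _ <| childRestrict X ·)
    (sum_Pfun_le_one _ <| childRestrict X ·) hδ0 hδ _ hbad
    (fun j hj => ih j (by simpa using hj)) hm (by simpa using hmk) c

lemma Pfun_le_of_unbiasing {ε m : ℝ} (hΔ : 0 < Δ)
    (hδ : (Δ : ℝ) ^ (-(ε / 2)) ≤ 1 / 2) (hm : 0 < m)
    (hmk : m ≤ k - 2 * (Δ : ℝ) ^ ((1 : ℝ) - ε))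
    (hstep : 2 * exp ((1 + 2 * (Δ : ℝ) ^ (-(ε / 2))) * Δ / m) / m ≤ (Δ : ℝ) ^ (-(ε / 2)))
    (n : ℕ) (X : (Fin (n + 1) → Fin Δ) → Option (Fin k)) (hU : Unbiasing Δ k ε (n + 1) X)
    (c : Fin k) : Pfun Δ k (n + 1) X c ≤ (Δ : ℝ) ^ (-(ε / 2)) := by
  induction n generalizing c with
  | zero => exact Pfun_one_le_of_unbiasing hΔ hU c
  | succ n ih =>
    exact (Pfun_succ_succ_le_of_unbiasing (by positivity) hδ hm hmk hU
      (fun j hj d => ih (childRestrict X j) hj d) c).trans hstep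

end Pfun

lemma one_div_add_div_two_lt_one {C ε : ℝ} (hε0 : 0 < ε) (hε1 : ε < 1) (hεC : ε ≤ C - 1) :
    1 / C + ε / 2 < 1 := by
  have hC : 0 < C := by linarith
  rw [← lt_sub_iff_add_lt, div_lt_iff₀ hC]
  nlinarith

lemma two_mul_exp_div_le_rpow_neg {x q s β γ : ℝ} (hx : 1 < x) (hq : 1 ≤ q)
    (hs : s ≤ (1 - β - γ) * q) (hlog : 2 * log x / x ^ γ ≤ 1) :
    2 * exp (s * x / (x * q / log x)) / (x * q / log x) ≤ x ^ (-β) := by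
  have hL : 0 < log x := log_pos hx
  have hx0 : 0 < x := by linarith
  have hexp : s * x / (x * q / log x) ≤ log x * (1 - β - γ) := by
    rw [div_le_iff₀ (by positivity)]
    have := mul_le_mul_of_nonneg_left hs (mul_nonneg hL.le hx0.le)
    field_simp
    nlinarith
  have hpow : exp (log x * (1 - β - γ)) = x * x ^ (-β) / x ^ γ := by
    rw [← rpow_def_of_pos hx0, sub_sub, rpow_sub hx0, rpow_one, rpow_add hx0, rpow_neg hx0.le]
    field_simp
  calc 2 * exp (s * x / (x * q / log x)) / (x * q / log x)
      ≤ 2 * exp (log x * (1 - β - γ)) / (x * q / log x) := by gcongr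
    _ = 2 * log x / x ^ γ * x ^ (-β) / q := by
        rw [hpow]
        field_simp
    _ ≤ 1 * x ^ (-β) / 1 := by gcongr
    _ = x ^ (-β) := by ring

-- `C x / log x - 2 x ^ (1 - ε)` bounds from below the number of colors on which the children that
-- are not unbiasing put mass at most `1 / 2`, when `k > C x / log x`.
lemma eventually_step_conditions {C ε : ℝ} (hC : 1 < C) (hε : 0 < ε) (hCε : 1 / C + ε / 2 < 1) :
    ∀ᶠ x : ℝ in atTop, x ^ (-(ε / 2)) ≤ 1 / 2 ∧ 0 < C * x / log x - 2 * x ^ ((1 : ℝ) - ε) ∧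
      2 * exp ((1 + 2 * x ^ (-(ε / 2))) * x / (C * x / log x - 2 * x ^ ((1 : ℝ) - ε))) /
        (C * x / log x - 2 * x ^ ((1 : ℝ) - ε)) ≤ x ^ (-(ε / 2)) := by
  set γ := (1 - 1 / C - ε / 2) / 2
  have hγ : 0 < γ := by simp only [γ]; linarith
  have hδ : Tendsto (fun x : ℝ => x ^ (-(ε / 2))) atTop (𝓝 0) :=
    tendsto_rpow_neg_atTop (by positivity)
  have hq : Tendsto (fun x => C - 2 * (log x / x ^ ε)) atTop (𝓝 C) := by
    simpa using tendsto_const_nhds.sub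
      ((isLittleO_log_rpow_atTop hε).tendsto_div_nhds_zero.const_mul 2)
  have hratio : Tendsto (fun x => (1 + 2 * x ^ (-(ε / 2))) / (C - 2 * (log x / x ^ ε))) atTop
      (𝓝 (1 / C)) := by
    have h := (tendsto_const_nhds (x := (1 : ℝ)) |>.add (hδ.const_mul 2)).div hq (by linarith)
    rwa [mul_zero, add_zero] at h
  have hlog : Tendsto (fun x => 2 * (log x / x ^ γ)) atTop (𝓝 0) := by
    simpa using (isLittleO_log_rpow_atTop hγ).tendsto_div_nhds_zero.const_mul 2
  filter_upwards [eventually_gt_atTop 1,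
    hδ.eventually (eventually_le_nhds (by norm_num : (0 : ℝ) < 1 / 2)),
    hq.eventually (eventually_ge_nhds hC),
    hratio.eventually (eventually_lt_nhds (lt_add_of_pos_right _ hγ)),
    hlog.eventually (eventually_le_nhds one_pos)]
    with x hx hδx hqx hratiox hlogx
  have hx0 : 0 < x := by linarith
  have hL : 0 < log x := log_pos hx
  have hm : C * x / log x - 2 * x ^ ((1 : ℝ) - ε) = x * (C - 2 * (log x / x ^ ε)) / log x := by
    rw [rpow_sub hx0, rpow_one]
    field_simp
  rw [hm]
  refine ⟨hδx, by positivity, two_mul_exp_div_le_rpow_neg (γ := γ) hx hqx ?_ ?_⟩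
  · rw [div_lt_iff₀ (by linarith), show 1 / C + γ = 1 - ε / 2 - γ by ring] at hratiox
    exact hratiox.le
  · rwa [mul_div_assoc]

/-- Lemma 6 of the paper: for an unbiasing allowed partial coloring of
the leaves, the root is not too biased towards any color: `P_ℓ(X,c) ≤ Δ^{-ε/2}`. -/
theorem unbiasing_root_bound (C : ℝ) (hC : 1 < C) (ε : ℝ) (hε : ε = min (C - 1) (1 / 3)) :
    ∃ Δ₀ : ℕ, ∀ Δ : ℕ, Δ₀ < Δ → ∀ k : ℕ, C * Δ / Real.log Δ < (k : ℝ) →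
      ∀ ℓ : ℕ, 1 ≤ ℓ → ∀ X : (Fin ℓ → Fin Δ) → Option (Fin k),
        AllowedP Δ ℓ k X → Unbiasing Δ k ε ℓ X →
          ∀ c : Fin k, Pfun Δ k ℓ X c ≤ (Δ : ℝ) ^ (-(ε / 2)) := by
  have hε0 : 0 < ε := hε ▸ lt_min (by linarith) (by norm_num)
  have hCε : 1 / C + ε / 2 < 1 := one_div_add_div_two_lt_one hε0
    ((hε ▸ min_le_right _ _ : ε ≤ 1 / 3).trans_lt (by norm_num)) (hε ▸ min_le_left _ _)
  obtain ⟨Δ₀, hΔ₀⟩ := eventually_atTop.1 <|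
    tendsto_natCast_atTop_atTop.eventually (eventually_step_conditions hC hε0 hCε)
  refine ⟨Δ₀, fun Δ hΔ k hk ℓ hℓ X _ hU c => ?_⟩
  obtain ⟨hδ, hm, hstep⟩ := hΔ₀ Δ hΔ.le
  obtain ⟨n, rfl⟩ := Nat.exists_eq_add_of_le' hℓ
  exact Pfun_le_of_unbiasing (by omega) hδ hm (by linarith) hstep n X hU c
end

section
/- For every k ≥ 2, every ℓ ≥ 0, and any two distinct colors c₁, c₂ ∈ [k], there exists a coupling ν of μ^↓_{c₁,ℓ} and μ^↓_{c₂,ℓ} such that the expectation of H_ℓ(X,Y) for (X,Y) drawn from ν equals (Δ/(k−1))^ℓ. -/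
/-!
A proper coloring of `T_{ℓ+1}` with root color `c` is the same as a `Δ`-tuple of proper colorings
of `T_ℓ` whose roots avoid `c`, and the number of proper colorings of `T_ℓ` with a given root color
does not depend on that color. Hence under `μ↓_{c,ℓ+1}` the leaf colorings of the `Δ` subtrees of
the root are independent, each distributed as the average of `μ↓_{d,ℓ}` over the colors `d ≠ c`.

Couple the child colors `d` and `swap c₁ c₂ d`; this matches `[k] ∖ {c₁}` with `[k] ∖ {c₂}`, and the
two colors agree unless `d = c₂`, which has probability `1/(k-1)` and gives the pair `c₂, c₁`. Below
each child use the same construction recursively; for equal colors it is the diagonal coupling,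
since `swap c c = id`. The expected Hamming distance `h_ℓ` for distinct root colors therefore
satisfies `h_0 = 1` and `h_{ℓ+1} = Δ h_ℓ / (k-1)`.
-/

open Finset

section Couplings

variable {α β : Type*} [Fintype α] [Fintype β] {ν : α × β → ℝ} {p : α → ℝ} {q : β → ℝ}

theorem IsCoupling.sum_eq (h : IsCoupling ν p q) : ∑ z, ν z = ∑ x, p x := by
  rw [Fintype.sum_prod_type]
  exact sum_congr rfl fun x _ => h.2.1 x

theorem IsCoupling.comp_equiv {α' β' : Type*} [Fintype α'] [Fintype β'] (h : IsCoupling ν p q)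
    (e : α' ≃ α) (e' : β' ≃ β) : IsCoupling (ν ∘ Prod.map e e') (p ∘ e) (q ∘ e') :=
  ⟨fun _ => h.1 _, fun x => (e'.sum_comp fun y => ν (e x, y)).trans (h.2.1 _),
    fun y => (e.sum_comp fun x => ν (x, e' y)).trans (h.2.2 _)⟩

theorem isCoupling_finset_sum {ι : Type*} {s : Finset ι} {w : ι → ℝ} {ν : ι → α × β → ℝ}
    {p : ι → α → ℝ} {q : ι → β → ℝ} (hw : ∀ i ∈ s, 0 ≤ w i)
    (h : ∀ i ∈ s, IsCoupling (ν i) (p i) (q i)) :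
    IsCoupling (fun z => ∑ i ∈ s, w i * ν i z) (fun x => ∑ i ∈ s, w i * p i x)
      (fun y => ∑ i ∈ s, w i * q i y) := by
  refine ⟨fun z => sum_nonneg fun i hi => mul_nonneg (hw i hi) ((h i hi).1 z), fun x => ?_,
    fun y => ?_⟩
  · rw [sum_comm]
    exact sum_congr rfl fun i hi => by rw [← mul_sum, (h i hi).2.1]
  · rw [sum_comm]
    exact sum_congr rfl fun i hi => by rw [← mul_sum, (h i hi).2.2]

theorem isCoupling_pi {ι : Type*} [Fintype ι] [DecidableEq ι] {ν : ι → α × β → ℝ}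
    {p : ι → α → ℝ} {q : ι → β → ℝ} (h : ∀ i, IsCoupling (ν i) (p i) (q i)) :
    IsCoupling (fun z : (ι → α) × (ι → β) => ∏ i, ν i (z.1 i, z.2 i))
      (fun x => ∏ i, p i (x i)) (fun y => ∏ i, q i (y i)) := by
  refine ⟨fun z => prod_nonneg fun i _ => (h i).1 _, fun x => ?_, fun y => ?_⟩
  · rw [← Fintype.prod_sum fun i b => ν i (x i, b)]
    exact prod_congr rfl fun i _ => (h i).2.1 _
  · rw [← Fintype.prod_sum fun i a => ν i (a, y i)]
    exact prod_congr rfl fun i _ => (h i).2.2 _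

theorem isCoupling_dirac [DecidableEq α] [DecidableEq β] (a : α) (b : β) :
    IsCoupling (fun z => if z = (a, b) then 1 else 0) (fun x => if x = a then 1 else 0)
      (fun y => if y = b then 1 else 0) := by
  refine ⟨fun _ => by positivity, fun x => ?_, fun y => ?_⟩
  · by_cases hx : x = a <;> simp [hx]
  · by_cases hy : y = b <;> simp [hy]

end Couplings

theorem sum_prod_mul_sum_of_sum_eq_one {ι γ : Type*} [Fintype ι] [DecidableEq ι] [Fintype γ]
    (K f : ι → γ → ℝ) (hK : ∀ i, ∑ w, K i w = 1) :
    ∑ r : ι → γ, (∏ i, K i (r i)) * ∑ i, f i (r i) = ∑ i, ∑ w, K i w * f i w := by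
  simp_rw [mul_sum]
  rw [sum_comm]
  refine sum_congr rfl fun i _ => ?_
  calc ∑ r : ι → γ, (∏ j, K j (r j)) * f i (r i)
      = ∑ r : ι → γ, ∏ j, (K j (r j) * if j = i then f j (r j) else 1) := by
        refine sum_congr rfl fun r _ => ?_
        rw [prod_mul_distrib, Fintype.prod_ite_eq']
    _ = ∏ j, ∑ w, K j w * if j = i then f j w else 1 :=
        (Fintype.prod_sum fun j w => K j w * if j = i then f j w else 1).symm
    _ = ∑ w, K i w * f i w := by
        rw [Fintype.prod_eq_single i fun j hj => by simp [hj, hK]]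
        simp

section Subtrees

variable {Δ ℓ k : ℕ}

def TVertex.inSubtree (j : Fin Δ) (v : TVertex Δ ℓ) : TVertex Δ (ℓ + 1) :=
  ⟨⟨v.1.val + 1, Nat.succ_lt_succ v.1.isLt⟩, Fin.cons j v.2⟩

theorem TVertex.inSubtree_tchild (j : Fin Δ) (v : TVertex Δ ℓ) (h : v.1.val < ℓ) (i : Fin Δ) :
    inSubtree j (tchild v h i) = tchild (inSubtree j v) (Nat.succ_lt_succ h) i :=
  Sigma.ext rfl (heq_of_eq (Fin.cons_snoc_eq_snoc_cons _ _ _))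

theorem tchild_troot (j : Fin Δ) :
    tchild (troot Δ (ℓ + 1)) (Nat.succ_pos ℓ) j = TVertex.inSubtree j (troot Δ ℓ) :=
  Sigma.ext rfl (heq_of_eq (funext fun i => by rw [Fin.fin_one_eq_zero i]; rfl))

theorem TVertex.eq_troot_or_inSubtree (v : TVertex Δ (ℓ + 1)) :
    v = troot Δ (ℓ + 1) ∨ ∃ j w, v = inSubtree j w := by
  obtain ⟨⟨i, hi⟩, f⟩ := v
  cases i with
  | zero => exact Or.inl (Sigma.ext rfl (heq_of_eq (funext fun i => i.elim0)))
  | succ i =>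
    exact Or.inr ⟨f 0, ⟨⟨i, Nat.lt_of_succ_lt_succ hi⟩, Fin.tail f⟩,
      Sigma.ext rfl (heq_of_eq (Fin.cons_self_tail f).symm)⟩

theorem TVertex.eq_troot_zero (v : TVertex Δ 0) : v = troot Δ 0 := by
  obtain ⟨⟨i, hi⟩, f⟩ := v
  obtain rfl : i = 0 := by omega
  exact Sigma.ext rfl (heq_of_eq (funext fun i => i.elim0))

def subtreeColoring (σ : TVertex Δ (ℓ + 1) → Fin k) (j : Fin Δ) : TVertex Δ ℓ → Fin k :=
  σ ∘ TVertex.inSubtree j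

def graftColoring (c : Fin k) (τ : Fin Δ → TVertex Δ ℓ → Fin k) : TVertex Δ (ℓ + 1) → Fin k
  | ⟨⟨0, _⟩, _⟩ => c
  | ⟨⟨i + 1, hi⟩, f⟩ => τ (f 0) ⟨⟨i, Nat.lt_of_succ_lt_succ hi⟩, Fin.tail f⟩

theorem subtreeColoring_graftColoring (c : Fin k) (τ : Fin Δ → TVertex Δ ℓ → Fin k) :
    subtreeColoring (graftColoring c τ) = τ := by
  funext j ⟨⟨i, hi⟩, f⟩
  simp [subtreeColoring, graftColoring, TVertex.inSubtree]

theorem graftColoring_subtreeColoring (σ : TVertex Δ (ℓ + 1) → Fin k) :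
    graftColoring (σ (troot Δ (ℓ + 1))) (subtreeColoring σ) = σ := by
  funext v
  rcases TVertex.eq_troot_or_inSubtree v with rfl | ⟨j, w, rfl⟩
  · rfl
  · exact congrFun (congrFun
      (subtreeColoring_graftColoring (σ (troot Δ (ℓ + 1))) (subtreeColoring σ)) j) w

theorem properColoring_succ_iff (σ : TVertex Δ (ℓ + 1) → Fin k) :
    ProperColoring Δ (ℓ + 1) k σ ↔
      (∀ j, subtreeColoring σ j (troot Δ ℓ) ≠ σ (troot Δ (ℓ + 1))) ∧
        ∀ j, ProperColoring Δ ℓ k (subtreeColoring σ j) := by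
  refine ⟨fun hσ => ⟨fun j => ?_, fun j w h i => ?_⟩, fun ⟨hroot, hsub⟩ v h i => ?_⟩
  · simpa [subtreeColoring, tchild_troot, eq_comm] using hσ (troot Δ (ℓ + 1)) (Nat.succ_pos ℓ) j
  · simpa [subtreeColoring, TVertex.inSubtree_tchild] using
      hσ (TVertex.inSubtree j w) (Nat.succ_lt_succ h) i
  · rcases TVertex.eq_troot_or_inSubtree v with rfl | ⟨j, w, rfl⟩
    · rw [tchild_troot]
      exact (hroot i).symm
    · have hw : w.1.val < ℓ := Nat.lt_of_succ_lt_succ h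
      simpa [subtreeColoring, TVertex.inSubtree_tchild] using hsub j w hw i

theorem leafColoring_eq_iff_subtree (σ : TVertex Δ (ℓ + 1) → Fin k)
    (X : (Fin (ℓ + 1) → Fin Δ) → Fin k) :
    leafColoring σ = X ↔ ∀ j, leafColoring (subtreeColoring σ j) = childRestrict X j := by
  refine ⟨fun h j => h ▸ rfl, fun h => funext fun f => ?_⟩
  rw [← Fin.cons_self_tail f]
  exact congrFun (h (f 0)) (Fin.tail f)

def properSubtreeEquiv (c : Fin k) (R : Fin Δ → (TVertex Δ ℓ → Fin k) → Prop) :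
    {σ : TVertex Δ (ℓ + 1) → Fin k // ProperColoring Δ (ℓ + 1) k σ ∧
        σ (troot Δ (ℓ + 1)) = c ∧ ∀ j, R j (subtreeColoring σ j)} ≃
      ∀ j, {τ : TVertex Δ ℓ → Fin k // ProperColoring Δ ℓ k τ ∧ τ (troot Δ ℓ) ≠ c ∧ R j τ} where
  toFun σ j := ⟨subtreeColoring σ.1 j, ((properColoring_succ_iff σ.1).1 σ.2.1).2 j,
    fun h => ((properColoring_succ_iff σ.1).1 σ.2.1).1 j (h.trans σ.2.2.1.symm), σ.2.2.2 j⟩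
  invFun τ := ⟨graftColoring c fun j => (τ j).1, by
    refine ⟨(properColoring_succ_iff _).2 ⟨fun j => ?_, fun j => ?_⟩, rfl, fun j => ?_⟩ <;>
      rw [subtreeColoring_graftColoring]
    exacts [(τ j).2.2.1, (τ j).2.1, (τ j).2.2.2]⟩
  left_inv := by
    rintro ⟨σ, -, rfl, -⟩
    exact Subtype.ext (graftColoring_subtreeColoring σ)
  right_inv τ := funext fun j =>
    Subtype.ext (congrFun (subtreeColoring_graftColoring c fun j => (τ j).1) j)

end Subtrees

theorem Nat.card_subtype_eq_sum_card_fiber {α β : Type*} [Finite α] [Fintype β] (P : α → Prop)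
    (s : α → β) : Nat.card {a // P a} = ∑ b, Nat.card {a // P a ∧ s a = b} := by
  rw [← Nat.card_congr (Equiv.sigmaFiberEquiv fun a : {a // P a} => s a), Nat.card_sigma]
  exact sum_congr rfl fun b _ =>
    Nat.card_congr (Equiv.subtypeSubtypeEquivSubtypeInter P fun a => s a = b)

theorem Finset.sum_erase_swap {α M : Type*} [Fintype α] [DecidableEq α] [AddCommMonoid M]
    (f : α → M) (a b : α) :
    ∑ x ∈ univ.erase a, f (Equiv.swap a b x) = ∑ x ∈ univ.erase b, f x :=
  sum_equiv (Equiv.swap a b) (fun x => by simp [Equiv.swap_apply_eq_iff]) fun _ _ => rfl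

theorem Fin.natCast_card_univ_erase {R : Type*} [AddGroupWithOne R] {k : ℕ} (c : Fin k) :
    ((univ.erase c).card : R) = k - 1 := by
  rw [card_erase_of_mem (mem_univ c), card_univ, Fintype.card_fin, Nat.cast_sub c.pos,
    Nat.cast_one]

def childRestrictEquiv (Δ ℓ : ℕ) (β : Type*) :
    ((Fin (ℓ + 1) → Fin Δ) → β) ≃ (Fin Δ → (Fin ℓ → Fin Δ) → β) :=
  ((Fin.consEquiv fun _ => Fin Δ).symm.arrowCongr (Equiv.refl β)).trans (Equiv.curry _ _ _)

section Counting

variable {Δ ℓ k : ℕ}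

noncomputable def numProperColorings (Δ ℓ k : ℕ) (c : Fin k) (X : (Fin ℓ → Fin Δ) → Fin k) : ℕ :=
  Nat.card {σ : TVertex Δ ℓ → Fin k //
    ProperColoring Δ ℓ k σ ∧ σ (troot Δ ℓ) = c ∧ leafColoring σ = X}

theorem downDist_eq (c : Fin k) (X : (Fin ℓ → Fin Δ) → Fin k) :
    downDist Δ ℓ k c X =
      numProperColorings Δ ℓ k c X / ∑ Y, (numProperColorings Δ ℓ k c Y : ℝ) := by
  rw [downDist, Nat.card_subtype_eq_sum_card_fiber
    (fun σ => ProperColoring Δ ℓ k σ ∧ σ (troot Δ ℓ) = c) leafColoring]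
  simp only [numProperColorings, and_assoc, Nat.cast_sum]

theorem card_proper_root_ne (c : Fin k) (Q : (TVertex Δ ℓ → Fin k) → Prop) :
    Nat.card {τ : TVertex Δ ℓ → Fin k // ProperColoring Δ ℓ k τ ∧ τ (troot Δ ℓ) ≠ c ∧ Q τ} =
      ∑ d ∈ univ.erase c,
        Nat.card {τ : TVertex Δ ℓ → Fin k // ProperColoring Δ ℓ k τ ∧ τ (troot Δ ℓ) = d ∧ Q τ} := by
  rw [Nat.card_subtype_eq_sum_card_fiber
      (fun τ => ProperColoring Δ ℓ k τ ∧ τ (troot Δ ℓ) ≠ c ∧ Q τ) fun τ => τ (troot Δ ℓ),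
    ← add_sum_erase _ _ (mem_univ c), Nat.card_eq_zero.2 (.inl ⟨fun τ => τ.2.1.2.1 τ.2.2⟩),
    zero_add]
  refine sum_congr rfl fun d hd => Nat.card_congr (Equiv.subtypeEquivRight fun τ => ?_)
  have := ne_of_mem_erase hd
  grind

theorem numProperColorings_succ (c : Fin k) (X : (Fin (ℓ + 1) → Fin Δ) → Fin k) :
    numProperColorings Δ (ℓ + 1) k c X =
      ∏ j, ∑ d ∈ univ.erase c, numProperColorings Δ ℓ k d (childRestrict X j) := by
  rw [numProperColorings, ← Nat.card_congr (Equiv.subtypeEquivRight fun σ => by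
      rw [leafColoring_eq_iff_subtree σ X]),
    Nat.card_congr (properSubtreeEquiv c fun j τ => leafColoring τ = childRestrict X j),
    Nat.card_pi]
  exact prod_congr rfl fun j _ => card_proper_root_ne c _

theorem numProperColorings_zero (c : Fin k) (X : (Fin 0 → Fin Δ) → Fin k) :
    numProperColorings Δ 0 k c X = if X = fun _ => c then 1 else 0 := by
  have hleaf (σ : TVertex Δ 0 → Fin k) : leafColoring σ = fun _ => σ (troot Δ 0) :=
    funext fun f => congrArg σ (TVertex.eq_troot_zero _)
  split_ifs with hX
  · refine Nat.card_eq_one_iff_exists.2 ⟨⟨fun _ => c, fun _ h => absurd h (Nat.not_lt_zero _),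
      rfl, hX ▸ hleaf _⟩, fun σ => Subtype.ext (funext fun v => ?_)⟩
    rw [TVertex.eq_troot_zero v]
    exact σ.2.2.1
  · refine Nat.card_eq_zero.2 (.inl ⟨fun σ => hX ?_⟩)
    rw [← σ.2.2.2, hleaf, σ.2.2.1]

theorem sum_numProperColorings_succ (c : Fin k) :
    ∑ X, numProperColorings Δ (ℓ + 1) k c X =
      ∏ _j : Fin Δ, ∑ d ∈ univ.erase c, ∑ A, numProperColorings Δ ℓ k d A := by
  rw [Fintype.sum_equiv (childRestrictEquiv Δ ℓ (Fin k)) _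
      (fun p => ∏ j, ∑ d ∈ univ.erase c, numProperColorings Δ ℓ k d (p j))
      (numProperColorings_succ c),
    ← Fintype.prod_sum fun _ A => ∑ d ∈ univ.erase c, numProperColorings Δ ℓ k d A]
  exact prod_congr rfl fun _ _ => sum_comm

theorem exists_sum_numProperColorings_eq (hk : 2 ≤ k) (ℓ : ℕ) :
    ∃ z, 0 < z ∧ ∀ c : Fin k, ∑ X, numProperColorings Δ ℓ k c X = z := by
  induction ℓ with
  | zero => exact ⟨1, one_pos, fun c => by simp [numProperColorings_zero]⟩
  | succ ℓ ih =>
    obtain ⟨z, hz, hsum⟩ := ih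
    refine ⟨((k - 1) * z) ^ Δ, pow_pos (Nat.mul_pos (by omega) hz) _, fun c => ?_⟩
    simp [sum_numProperColorings_succ, hsum]

end Counting

section Distributions

variable {Δ ℓ k : ℕ}

noncomputable def childDownDist (Δ ℓ k : ℕ) (c : Fin k) (A : (Fin ℓ → Fin Δ) → Fin k) : ℝ :=
  ∑ d ∈ univ.erase c, ((k : ℝ) - 1)⁻¹ * downDist Δ ℓ k d A

theorem downDist_zero (c : Fin k) (X : (Fin 0 → Fin Δ) → Fin k) :
    downDist Δ 0 k c X = if X = fun _ => c then 1 else 0 := by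
  simp [downDist_eq, numProperColorings_zero]

theorem downDist_succ (hk : 2 ≤ k) (c : Fin k) (X : (Fin (ℓ + 1) → Fin Δ) → Fin k) :
    downDist Δ (ℓ + 1) k c X = ∏ j, childDownDist Δ ℓ k c (childRestrict X j) := by
  obtain ⟨z, hz, hsum⟩ := exists_sum_numProperColorings_eq (Δ := Δ) hk ℓ
  have hsumℝ (d : Fin k) : ∑ A, (numProperColorings Δ ℓ k d A : ℝ) = z := by
    exact_mod_cast hsum d
  rw [downDist_eq, ← Nat.cast_sum, sum_numProperColorings_succ, numProperColorings_succ]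
  push_cast
  rw [← prod_div_distrib]
  refine prod_congr rfl fun j _ => ?_
  simp only [childDownDist, downDist_eq, hsumℝ, sum_const, nsmul_eq_mul,
    Fin.natCast_card_univ_erase, sum_div, ← mul_div_assoc]
  refine sum_congr rfl fun d _ => ?_
  field_simp

theorem sum_downDist (hk : 2 ≤ k) (c : Fin k) : ∑ X, downDist Δ ℓ k c X = 1 := by
  obtain ⟨z, hz, hsum⟩ := exists_sum_numProperColorings_eq (Δ := Δ) hk ℓ
  have hpos : (0 : ℝ) < ∑ Y, (numProperColorings Δ ℓ k c Y : ℝ) := by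
    rw [← Nat.cast_sum, hsum c]
    exact_mod_cast hz
  simp_rw [downDist_eq]
  rw [← sum_div, div_self hpos.ne']

theorem sum_childDownDist (hk : 2 ≤ k) (c : Fin k) : ∑ A, childDownDist Δ ℓ k c A = 1 := by
  have hk1 : (k : ℝ) - 1 ≠ 0 := by
    rw [sub_ne_zero, Nat.cast_ne_one]
    omega
  simp only [childDownDist]
  rw [sum_comm]
  simp_rw [← mul_sum]
  rw [sum_congr rfl fun d _ => sum_downDist hk d, sum_const, nsmul_eq_mul,
    Fin.natCast_card_univ_erase, mul_one, inv_mul_cancel₀ hk1]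

end Distributions

section Hamming

variable {Δ ℓ k : ℕ}

theorem leafHamming_eq_sum (X Y : (Fin ℓ → Fin Δ) → Fin k) :
    leafHamming X Y = ∑ f, if X f ≠ Y f then 1 else 0 := by
  rw [leafHamming, Nat.card_eq_fintype_card, Fintype.card_subtype, card_filter]

theorem leafHamming_zero (c c' : Fin k) :
    leafHamming (Δ := Δ) (fun _ : Fin 0 → Fin Δ => c) (fun _ => c') = if c = c' then 0 else 1 := by
  simp [leafHamming_eq_sum]

theorem leafHamming_succ (X Y : (Fin (ℓ + 1) → Fin Δ) → Fin k) :
    leafHamming X Y = ∑ j, leafHamming (childRestrict X j) (childRestrict Y j) := by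
  simp_rw [leafHamming_eq_sum]
  rw [← (Fin.consEquiv fun _ => Fin Δ).sum_comp, Fintype.sum_prod_type]
  rfl

end Hamming

noncomputable def childCoupling {k : ℕ} {γ : Type*} (ν : Fin k → Fin k → γ → ℝ) (c c' : Fin k)
    (w : γ) : ℝ :=
  ∑ d ∈ univ.erase c, ((k : ℝ) - 1)⁻¹ * ν d (Equiv.swap c c' d) w

noncomputable def leafCoupling (Δ k : ℕ) :
    (ℓ : ℕ) → Fin k → Fin k → ((Fin ℓ → Fin Δ) → Fin k) × ((Fin ℓ → Fin Δ) → Fin k) → ℝ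
  | 0, c, c', z => if z = (fun _ => c, fun _ => c') then 1 else 0
  | ℓ + 1, c, c', z =>
    ∏ j, childCoupling (leafCoupling Δ k ℓ) c c' (childRestrict z.1 j, childRestrict z.2 j)

section Coupling

variable {Δ k : ℕ}

theorem isCoupling_childCoupling {ℓ : ℕ}
    {ν : Fin k → Fin k → ((Fin ℓ → Fin Δ) → Fin k) × ((Fin ℓ → Fin Δ) → Fin k) → ℝ}
    (h : ∀ d d', IsCoupling (ν d d') (downDist Δ ℓ k d) (downDist Δ ℓ k d')) (c c' : Fin k) :
    IsCoupling (childCoupling ν c c') (childDownDist Δ ℓ k c) (childDownDist Δ ℓ k c') := by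
  have hw : (0 : ℝ) ≤ ((k : ℝ) - 1)⁻¹ := by
    rw [inv_nonneg, sub_nonneg, Nat.one_le_cast]
    exact c.pos
  have hswap : childDownDist Δ ℓ k c' = fun B =>
      ∑ d ∈ univ.erase c, ((k : ℝ) - 1)⁻¹ * downDist Δ ℓ k (Equiv.swap c c' d) B :=
    funext fun B => (sum_erase_swap (fun d => ((k : ℝ) - 1)⁻¹ * downDist Δ ℓ k d B) c c').symm
  rw [hswap]
  exact isCoupling_finset_sum (fun _ _ => hw) fun d _ => h d (Equiv.swap c c' d)

theorem isCoupling_leafCoupling (hk : 2 ≤ k) (ℓ : ℕ) (c c' : Fin k) :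
    IsCoupling (leafCoupling Δ k ℓ c c') (downDist Δ ℓ k c) (downDist Δ ℓ k c') := by
  induction ℓ generalizing c c' with
  | zero =>
    rw [funext (downDist_zero (Δ := Δ) c), funext (downDist_zero (Δ := Δ) c')]
    exact isCoupling_dirac _ _
  | succ ℓ ih =>
    have hK := isCoupling_childCoupling ih c c'
    rw [funext (downDist_succ (Δ := Δ) hk c), funext (downDist_succ (Δ := Δ) hk c')]
    exact (isCoupling_pi fun _ => hK).comp_equiv (childRestrictEquiv Δ ℓ (Fin k))
      (childRestrictEquiv Δ ℓ (Fin k))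

theorem sum_leafCoupling_succ_mul_leafHamming (hk : 2 ≤ k) (ℓ : ℕ) (c c' : Fin k) :
    ∑ z, leafCoupling Δ k (ℓ + 1) c c' z * (leafHamming z.1 z.2 : ℝ) =
      Δ * ∑ w, childCoupling (leafCoupling Δ k ℓ) c c' w * (leafHamming w.1 w.2 : ℝ) := by
  have hK := isCoupling_childCoupling (isCoupling_leafCoupling (Δ := Δ) hk ℓ) c c'
  rw [Fintype.sum_equiv (((childRestrictEquiv Δ ℓ (Fin k)).prodCongr
      (childRestrictEquiv Δ ℓ (Fin k))).trans (Equiv.arrowProdEquivProdArrow _ _ _).symm) _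
    (fun r => (∏ j, childCoupling (leafCoupling Δ k ℓ) c c' (r j)) *
      ∑ j, (leafHamming (r j).1 (r j).2 : ℝ))
    fun z => by rw [leafHamming_succ, Nat.cast_sum]; rfl,
    sum_prod_mul_sum_of_sum_eq_one (fun _ => childCoupling (leafCoupling Δ k ℓ) c c')
      (fun _ w => (leafHamming w.1 w.2 : ℝ)) fun _ => hK.sum_eq.trans (sum_childDownDist hk c),
    sum_const, card_univ, Fintype.card_fin, nsmul_eq_mul]

theorem sum_leafCoupling_mul_leafHamming (hk : 2 ≤ k) (ℓ : ℕ) (c c' : Fin k) :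
    ∑ z, leafCoupling Δ k ℓ c c' z * (leafHamming z.1 z.2 : ℝ) =
      if c = c' then 0 else ((Δ : ℝ) / ((k : ℝ) - 1)) ^ ℓ := by
  induction ℓ generalizing c c' with
  | zero => simp [leafCoupling, leafHamming_zero]
  | succ ℓ ih =>
    have hchild : ∑ w, childCoupling (leafCoupling Δ k ℓ) c c' w * (leafHamming w.1 w.2 : ℝ) =
        ∑ d ∈ univ.erase c, ((k : ℝ) - 1)⁻¹ *
          if d = Equiv.swap c c' d then 0 else ((Δ : ℝ) / ((k : ℝ) - 1)) ^ ℓ := by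
      simp_rw [childCoupling, sum_mul, mul_assoc]
      rw [sum_comm]
      simp_rw [← mul_sum, ih]
    rw [sum_leafCoupling_succ_mul_leafHamming hk, hchild]
    split_ifs with hcc
    · subst hcc
      simp
    · rw [sum_eq_single_of_mem c' (mem_erase.2 ⟨Ne.symm hcc, mem_univ _⟩) fun d hd hdc' => ?_]
      · rw [Equiv.swap_apply_right, if_neg (Ne.symm hcc), pow_succ]
        ring
      · rw [Equiv.swap_apply_of_ne_of_ne (ne_of_mem_erase hd) hdc', if_pos rfl, mul_zero]

end Coupling

theorem downward_coupling_general (Δ k : ℕ) (hk : 2 ≤ k) (ℓ : ℕ)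
    (c₁ c₂ : Fin k) (hne : c₁ ≠ c₂) :
    ∃ ν : ((Fin ℓ → Fin Δ) → Fin k) × ((Fin ℓ → Fin Δ) → Fin k) → ℝ,
      IsCoupling ν (downDist Δ ℓ k c₁) (downDist Δ ℓ k c₂) ∧
      ∑ q : ((Fin ℓ → Fin Δ) → Fin k) × ((Fin ℓ → Fin Δ) → Fin k),
          ν q * (leafHamming q.1 q.2 : ℝ) = ((Δ : ℝ) / ((k : ℝ) - 1)) ^ ℓ :=
  ⟨leafCoupling Δ k ℓ c₁ c₂, isCoupling_leafCoupling hk ℓ c₁ c₂, by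
    rw [sum_leafCoupling_mul_leafHamming hk, if_neg hne]⟩

/-- Lemma 11 of the paper: for any two distinct colors `c₁ c₂` there is
a coupling `ν` of `μ↓_{c₁,ℓ}` and `μ↓_{c₂,ℓ}` whose expected Hamming distance at the
leaves is exactly `(Δ/(k-1))^ℓ`. -/
theorem downward_coupling (Δ k : ℕ) (hΔ : 2 ≤ Δ) (hk : 2 ≤ k) (ℓ : ℕ)
    (c₁ c₂ : Fin k) (hne : c₁ ≠ c₂) :
    ∃ ν : ((Fin ℓ → Fin Δ) → Fin k) × ((Fin ℓ → Fin Δ) → Fin k) → ℝ,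
      IsCoupling ν (downDist Δ ℓ k c₁) (downDist Δ ℓ k c₂) ∧
      ∑ q : ((Fin ℓ → Fin Δ) → Fin k) × ((Fin ℓ → Fin Δ) → Fin k),
          ν q * (leafHamming q.1 q.2 : ℝ) = ((Δ : ℝ) / ((k : ℝ) - 1)) ^ ℓ :=
  downward_coupling_general Δ k hk ℓ c₁ c₂ hne
end

section
/- Let G be a finite graph with a boundary condition (a fixed proper partial k-coloring of a subset of vertices), let μ be the uniform distribution over proper k-colorings of G consistent with the boundary condition (assumed nonempty), let u be an unfixed vertex, and let μ_u be the marginal of μ at u. For a color c with μ_u(c) < 1, let μ^c_u be the marginal at u in the graph obtained from G by attaching a new vertex adjacent only to u that is fixed to color c (equivalently, μ_u conditioned on the color at u being different from c). Then for any two colors c₁, c₂ with μ_u(c₁) < 1 and μ_u(c₂) < 1: d_TV[μ^{c₂}_u, μ^{c₁}_u] = max{μ^{c₂}_u(c₁), μ^{c₁}_u(c₂)} = max{μ_u(c₁)/(1−μ_u(c₂)), μ_u(c₂)/(1−μ_u(c₁))}. In particular, if p^max_u = max_c μ_u(c) < 1, then d_TV[μ^{c₂}_u, μ^{c₁}_u]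 ≤ p^max_u/(1−p^max_u). -/
/-- Proper `k`-colorings of a graph. -/
def GraphProper {V : Type*} (G : SimpleGraph V) (k : ℕ) (σ : V → Fin k) : Prop :=
  ∀ v w : V, G.Adj v w → σ v ≠ σ w

/-- `σ` is consistent with the boundary condition `b`. -/
def GraphCons {V : Type*} {k : ℕ} (b : V → Option (Fin k)) (σ : V → Fin k) : Prop :=
  ∀ (v : V) (c : Fin k), b v = some c → σ v = c

/-- The marginal at `u` of the uniform distribution over proper colorings of `G`
consistent with `b`. -/
noncomputable def graphMarg {V : Type*} (G : SimpleGraph V) (k : ℕ)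
    (b : V → Option (Fin k)) (u : V) (c : Fin k) : ℝ :=
  (Nat.card {σ : V → Fin k // GraphProper G k σ ∧ GraphCons b σ ∧ σ u = c} : ℝ) /
    (Nat.card {σ : V → Fin k // GraphProper G k σ ∧ GraphCons b σ} : ℝ)

/-- The marginal at `u` after attaching to `u` a new neighbor fixed to color `cban`;
equivalently, the marginal at `u` conditioned on the color at `u` differing from `cban`. -/
noncomputable def graphMargBan {V : Type*} (G : SimpleGraph V) (k : ℕ)
    (b : V → Option (Fin k)) (u : V) (cban c : Fin k) : ℝ :=
  (Nat.card {σ : V → Fin k //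
      GraphProper G k σ ∧ GraphCons b σ ∧ σ u ≠ cban ∧ σ u = c} : ℝ) /
    (Nat.card {σ : V → Fin k // GraphProper G k σ ∧ GraphCons b σ ∧ σ u ≠ cban} : ℝ)

/-! Write `p` for the marginal at `u`. Banning the color `c` at `u` conditions `p` on `x ≠ c`,
which rescales `p` off `c` by `1 / (1 - p c)`. If `p c₂ ≤ p c₁`, the law conditioned away from `c₂`
exceeds the one conditioned away from `c₁` only at `c₁`, by `p c₁ / (1 - p c₂)`, and the total
variation distance between two distributions is the total positive excess of one over the other.
That this is the larger of the two ratios amounts to `(p c₁ - p c₂) (1 - p c₁ - p c₂) ≥ 0`. -/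

open Finset

section CondAway

variable {ι : Type*}

noncomputable def condAway [DecidableEq ι] (p : ι → ℝ) (c : ι) (x : ι) : ℝ :=
  if x = c then 0 else p x / (1 - p c)

lemma condAway_of_ne [DecidableEq ι] {p : ι → ℝ} {c x : ι} (h : x ≠ c) :
    condAway p c x = p x / (1 - p c) :=
  if_neg h

lemma sum_condAway [Fintype ι] [DecidableEq ι] {p : ι → ℝ} (hp : ∑ x, p x = 1) {c : ι}
    (hc : p c < 1) : ∑ x, condAway p c x = 1 := by
  calc ∑ x, condAway p c x = ∑ x ∈ univ.erase c, p x / (1 - p c) := by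
        rw [← add_sum_erase _ _ (mem_univ c), condAway, if_pos rfl, zero_add]
        exact sum_congr rfl fun x hx => condAway_of_ne (ne_of_mem_erase hx)
    _ = 1 := by
        rw [← sum_div, sum_erase_eq_sub (mem_univ c), hp]
        exact div_self (sub_pos.2 hc).ne'

lemma condAway_nonneg [DecidableEq ι] {p : ι → ℝ} (hp0 : ∀ x, 0 ≤ p x) {c : ι} (hc : p c ≤ 1)
    (x : ι) : 0 ≤ condAway p c x := by
  unfold condAway
  split_ifs
  exacts [le_rfl, div_nonneg (hp0 x) (sub_nonneg.2 hc)]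

lemma sum_abs_sub_eq_two_mul_sum_posPart [Fintype ι] {p q : ι → ℝ}
    (h : ∑ x, p x = ∑ x, q x) : ∑ x, |p x - q x| = 2 * ∑ x, (p x - q x)⁺ := by
  have habs : ∀ a : ℝ, |a| = 2 * a⁺ - a := fun a => by
    linarith [posPart_add_negPart a, posPart_sub_negPart a]
  simp only [habs, sum_sub_distrib, ← mul_sum, h, sub_self, sub_zero]

section TwoColors

variable [DecidableEq ι] {p : ι → ℝ} {c₁ c₂ : ι}

lemma posPart_condAway_sub_condAway (hp0 : ∀ x, 0 ≤ p x) (hc : c₁ ≠ c₂) (h₁ : p c₁ < 1)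
    (hle : p c₂ ≤ p c₁) (x : ι) :
    (condAway p c₂ x - condAway p c₁ x)⁺ = if x = c₁ then p c₁ / (1 - p c₂) else 0 := by
  split_ifs with hx
  · subst hx
    rw [condAway_of_ne hc, condAway, if_pos rfl, sub_zero, posPart_eq_self]
    exact div_nonneg (hp0 _) (sub_nonneg.2 (hle.trans h₁.le))
  · rw [posPart_eq_zero, sub_nonpos]
    by_cases hx₂ : x = c₂
    · rw [hx₂, condAway, if_pos rfl]
      exact condAway_nonneg hp0 h₁.le c₂
    · rw [condAway_of_ne hx₂, condAway_of_ne hx]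
      exact div_le_div_of_nonneg_left (hp0 x) (sub_pos.2 h₁) (sub_le_sub_left hle 1)

lemma sum_abs_condAway_sub_of_le [Fintype ι] (hp0 : ∀ x, 0 ≤ p x) (hp1 : ∑ x, p x = 1)
    (hc : c₁ ≠ c₂) (h₁ : p c₁ < 1) (hle : p c₂ ≤ p c₁) :
    ∑ x, |condAway p c₂ x - condAway p c₁ x| = 2 * (p c₁ / (1 - p c₂)) := by
  rw [sum_abs_sub_eq_two_mul_sum_posPart
      (by rw [sum_condAway hp1 (hle.trans_lt h₁), sum_condAway hp1 h₁]),
    sum_congr rfl fun x _ => posPart_condAway_sub_condAway hp0 hc h₁ hle x,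
    sum_ite_eq' univ c₁, if_pos (mem_univ _)]

end TwoColors

lemma div_one_sub_le_div_one_sub {a b : ℝ} (hba : b ≤ a) (hab : a + b ≤ 1)
    (ha : a < 1) : b / (1 - a) ≤ a / (1 - b) := by
  rw [div_le_div_iff₀ (sub_pos.2 ha) (sub_pos.2 (hba.trans_lt ha))]
  nlinarith

lemma add_le_sum_of_ne [Fintype ι] {p : ι → ℝ} (hp0 : ∀ x, 0 ≤ p x) {c₁ c₂ : ι} (hc : c₁ ≠ c₂) :
    p c₁ + p c₂ ≤ ∑ x, p x := by
  classical
  rw [← sum_pair hc]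
  exact sum_le_sum_of_subset_of_nonneg (subset_univ _) fun x _ _ => hp0 x

lemma sum_abs_condAway_sub [Fintype ι] [DecidableEq ι] {p : ι → ℝ} (hp0 : ∀ x, 0 ≤ p x)
    (hp1 : ∑ x, p x = 1) {c₁ c₂ : ι} (hc : c₁ ≠ c₂) (h₁ : p c₁ < 1) (h₂ : p c₂ < 1) :
    ∑ x, |condAway p c₂ x - condAway p c₁ x| =
      2 * max (p c₁ / (1 - p c₂)) (p c₂ / (1 - p c₁)) := by
  have hsum := hp1 ▸ add_le_sum_of_ne hp0 hc
  rcases le_total (p c₂) (p c₁) with hle | hle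
  · rw [sum_abs_condAway_sub_of_le hp0 hp1 hc h₁ hle,
      max_eq_left (div_one_sub_le_div_one_sub hle hsum h₁)]
  · simp_rw [abs_sub_comm (condAway p c₂ _)]
    rw [sum_abs_condAway_sub_of_le hp0 hp1 hc.symm h₂ hle,
      max_eq_right (div_one_sub_le_div_one_sub hle (by linarith) h₂)]

end CondAway

lemma tvDist_condAway {k : ℕ} {p : Fin k → ℝ} (hp0 : ∀ x, 0 ≤ p x) (hp1 : ∑ x, p x = 1)
    {c₁ c₂ : Fin k} (hc : c₁ ≠ c₂) (h₁ : p c₁ < 1) (h₂ : p c₂ < 1) :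
    tvDist (condAway p c₂) (condAway p c₁) = max (p c₁ / (1 - p c₂)) (p c₂ / (1 - p c₁)) := by
  rw [tvDist, sum_abs_condAway_sub hp0 hp1 hc h₁ h₂]
  ring

lemma div_one_sub_le_of_le {a b M : ℝ} (ha : 0 ≤ a) (haM : a ≤ M) (hbM : b ≤ M) (hM : M < 1) :
    a / (1 - b) ≤ M / (1 - M) :=
  div_le_div₀ (ha.trans haM) haM (sub_pos.2 hM) (sub_le_sub_left hbM 1)

section UniformLaw

variable {α ι : Type*} [DecidableEq ι]

noncomputable def uniformLaw (s : Finset α) (f : α → ι) (c : ι) : ℝ :=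
  #{a ∈ s | f a = c} / #s

lemma uniformLaw_nonneg (s : Finset α) (f : α → ι) (c : ι) : 0 ≤ uniformLaw s f c := by
  unfold uniformLaw
  positivity

lemma sum_uniformLaw [Fintype ι] {s : Finset α} (hs : s.Nonempty) (f : α → ι) :
    ∑ c, uniformLaw s f c = 1 := by
  simp only [uniformLaw]
  rw [← sum_div, ← Nat.cast_sum,
    ← card_eq_sum_card_fiberwise fun a _ => mem_coe.2 (mem_univ (f a))]
  exact div_self (Nat.cast_ne_zero.2 hs.card_pos.ne')

lemma uniformLaw_filter_ne (s : Finset α) (f : α → ι) (c : ι) :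
    uniformLaw {a ∈ s | f a ≠ c} f = condAway (uniformLaw s f) c := by
  rcases s.eq_empty_or_nonempty with rfl | hs
  · ext x
    simp [uniformLaw, condAway]
  ext x
  have hN : (#s : ℝ) ≠ 0 := Nat.cast_ne_zero.2 hs.card_pos.ne'
  have hcompl : (#{a ∈ s | f a ≠ c} : ℝ) = #s - #{a ∈ s | f a = c} := by
    rw [eq_sub_iff_add_eq, add_comm]
    exact_mod_cast card_filter_add_card_filter_not (s := s) (fun a => f a = c)
  unfold uniformLaw condAway
  split_ifs with hx
  · simp [filter_filter, hx]
  · rw [filter_filter, hcompl, one_sub_div hN, div_div_div_cancel_right₀ hN]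
    congr 3
    exact filter_congr fun a _ => ⟨And.right, fun h => ⟨h ▸ hx, h⟩⟩

end UniformLaw

section Graph

variable {V : Type*} [Fintype V] (G : SimpleGraph V) (k : ℕ) (b : V → Option (Fin k))

open Classical in
noncomputable def admissibleColorings : Finset (V → Fin k) :=
  {σ | GraphProper G k σ ∧ GraphCons b σ}

lemma graphMarg_eq_uniformLaw (u : V) :
    graphMarg G k b u = uniformLaw (admissibleColorings G k b) (· u) := by
  ext c
  simp only [graphMarg, uniformLaw, admissibleColorings, filter_filter]
  congr 2 <;> exact Nat.subtype_card _ fun σ => by simp [and_assoc]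

lemma graphMargBan_eq_uniformLaw (u : V) (cban : Fin k) :
    graphMargBan G k b u cban =
      uniformLaw {σ ∈ admissibleColorings G k b | σ u ≠ cban} (· u) := by
  ext c
  simp only [graphMargBan, uniformLaw, admissibleColorings, filter_filter]
  congr 2 <;> exact Nat.subtype_card _ fun σ => by simp [and_assoc]

lemma graphMarg_nonneg (u : V) (c : Fin k) : 0 ≤ graphMarg G k b u c := by
  rw [graphMarg_eq_uniformLaw]
  exact uniformLaw_nonneg _ _ c

lemma sum_graphMarg (hne : ∃ σ : V → Fin k, GraphProper G k σ ∧ GraphCons b σ) (u : V) :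
    ∑ c, graphMarg G k b u c = 1 := by
  obtain ⟨σ, hσ⟩ := hne
  rw [graphMarg_eq_uniformLaw]
  exact sum_uniformLaw ⟨σ, by simpa [admissibleColorings] using hσ⟩ _

lemma graphMargBan_eq_condAway (u : V) (cban : Fin k) :
    graphMargBan G k b u cban = condAway (graphMarg G k b u) cban := by
  rw [graphMargBan_eq_uniformLaw, uniformLaw_filter_ne, graphMarg_eq_uniformLaw]

end Graph

theorem disagreement_percolation_bound_general {V : Type*} [Fintype V] (G : SimpleGraph V)
    (k : ℕ) (b : V → Option (Fin k)) (u : V)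
    (hne : ∃ σ : V → Fin k, GraphProper G k σ ∧ GraphCons b σ)
    (c₁ c₂ : Fin k) (hcc : c₁ ≠ c₂)
    (h₁ : graphMarg G k b u c₁ < 1) (h₂ : graphMarg G k b u c₂ < 1) :
    tvDist (graphMargBan G k b u c₂) (graphMargBan G k b u c₁) =
        max (graphMargBan G k b u c₂ c₁) (graphMargBan G k b u c₁ c₂) ∧
    tvDist (graphMargBan G k b u c₂) (graphMargBan G k b u c₁) =
        max (graphMarg G k b u c₁ / (1 - graphMarg G k b u c₂))
          (graphMarg G k b u c₂ / (1 - graphMarg G k b u c₁)) ∧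
    ((⨆ c : Fin k, graphMarg G k b u c) < 1 →
      tvDist (graphMargBan G k b u c₂) (graphMargBan G k b u c₁) ≤
        (⨆ c : Fin k, graphMarg G k b u c) / (1 - ⨆ c : Fin k, graphMarg G k b u c)) := by
  have hp0 := graphMarg_nonneg G k b u
  have hp1 := sum_graphMarg G k b hne u
  have htv : tvDist (graphMargBan G k b u c₂) (graphMargBan G k b u c₁) =
      max (graphMarg G k b u c₁ / (1 - graphMarg G k b u c₂))
        (graphMarg G k b u c₂ / (1 - graphMarg G k b u c₁)) := by
    simp only [graphMargBan_eq_condAway]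
    exact tvDist_condAway hp0 hp1 hcc h₁ h₂
  refine ⟨?_, htv, fun hM => ?_⟩
  · rw [htv]
    simp only [graphMargBan_eq_condAway, condAway_of_ne hcc, condAway_of_ne hcc.symm]
  · have hle : ∀ c, graphMarg G k b u c ≤ ⨆ c, graphMarg G k b u c :=
      le_ciSup (Set.finite_range _).bddAbove
    rw [htv]
    exact max_le (div_one_sub_le_of_le (hp0 c₁) (hle c₁) (hle c₂) hM)
      (div_one_sub_le_of_le (hp0 c₂) (hle c₂) (hle c₁) hM)

/-- Proposition 16 of the paper, from Martinelli-Sinclair-Weitz: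
the effect of a disagreeing extra neighbor at `u` on the marginal at `u`. -/
theorem disagreement_percolation_bound {V : Type*} [Fintype V] (G : SimpleGraph V)
    (k : ℕ) (hk : 2 ≤ k) (b : V → Option (Fin k)) (u : V) (hu : b u = none)
    (hne : ∃ σ : V → Fin k, GraphProper G k σ ∧ GraphCons b σ)
    (c₁ c₂ : Fin k) (hcc : c₁ ≠ c₂)
    (h₁ : graphMarg G k b u c₁ < 1) (h₂ : graphMarg G k b u c₂ < 1) :
    tvDist (graphMargBan G k b u c₂) (graphMargBan G k b u c₁) =
        max (graphMargBan G k b u c₂ c₁) (graphMargBan G k b u c₁ c₂) ∧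
    tvDist (graphMargBan G k b u c₂) (graphMargBan G k b u c₁) =
        max (graphMarg G k b u c₁ / (1 - graphMarg G k b u c₂))
          (graphMarg G k b u c₂ / (1 - graphMarg G k b u c₁)) ∧
    ((⨆ c : Fin k, graphMarg G k b u c) < 1 →
      tvDist (graphMargBan G k b u c₂) (graphMargBan G k b u c₁) ≤
        (⨆ c : Fin k, graphMarg G k b u c) / (1 - ⨆ c : Fin k, graphMarg G k b u c)) :=
  disagreement_percolation_bound_general G k b u hne c₁ c₂ hcc h₁ h₂
end

section
/- Fix ℓ, δ > 0 and A ≥ 0. Suppose that for every pair of colors c₁, c₂ ∈ [k] there exists a coupling ν of μ^↓_{c₁,ℓ} and μ^↓_{c₂,ℓ} such that the probability over (X,Y) drawn from ν that d_TV[μ^↑_{X,ℓ}, μ^↑_{Y,ℓ}] > δ³ is at most A. Then for every color c ∈ [k], the probability over X drawn from the leaf-marginal of μ_ℓ that |μ^↑_{X,ℓ}(c) − 1/k| > 2δ is at most 2(e^{−1/δ} + A/δ). -/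
open Finset

/-!
By colour symmetry the root colour of a uniform proper colouring is uniform, so Bayes' rule gives
`μ↓_{c'}(X) = k · μ(X) · μ↑_X(c')`. Hence, with `U(s) = P_X(μ↑_X(c) > s)`, we get
`k s U(s) ≤ P_{X ∼ μ↓_c}(μ↑_X(c) > s)`. In a coupling of `μ↓_c` and `μ↓_{c'}`, outside an event of
mass `A` the value `μ↑(c)` moves by at most `2δ³`; averaging over `c'` gives
`k s U(s) ≤ A + U(s - 2δ³)`, and symmetrically `L(t) ≤ A + k (t + 2δ³) L(t + 2δ³)` for
`L(t) = P_X(μ↑_X(c) < t)`. Iterating along the levels `1/k ± (2δ - 2iδ³)`, `i ≤ 3/(4δ²)`, the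
factors `1 + 2(2δ - 2iδ³)` (resp. `1 - 2(…)`) multiply to at least `e^{1/δ}` (resp. at most
`e^{-1/δ}`), while the accumulated error terms form a geometric series bounded by `A/δ`.
The tree enters only through the uniformity of the root and Bayes' rule, so the argument runs for
any joint weight `w c X` of a colour and a boundary whose colour marginal is uniform.
-/

lemma le_sum_prod_mul_add_prod_mul {f a r : ℕ → ℝ} (N : ℕ) (hr : ∀ n < N, 0 ≤ r n)
    (h : ∀ n < N, f n ≤ a n + r n * f (n + 1)) :
    f 0 ≤ ∑ j ∈ range N, (∏ i ∈ range j, r i) * a j + (∏ i ∈ range N, r i) * f N := by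
  induction N with
  | zero => simp
  | succ N ih =>
    have hprod : 0 ≤ ∏ i ∈ range N, r i :=
      prod_nonneg fun i hi => hr i (Nat.lt_succ_of_lt (mem_range.1 hi))
    calc f 0 ≤ ∑ j ∈ range N, (∏ i ∈ range j, r i) * a j + (∏ i ∈ range N, r i) * f N :=
          ih (fun n hn => hr n (by omega)) (fun n hn => h n (by omega))
      _ ≤ ∑ j ∈ range N, (∏ i ∈ range j, r i) * a j +
            (∏ i ∈ range N, r i) * (a N + r N * f (N + 1)) := by
          gcongr; exact h N (by omega)
      _ = _ := by rw [sum_range_succ, prod_range_succ]; ring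

lemma prod_range_le_pow {r : ℕ → ℝ} {q : ℝ} {N : ℕ} (hr : ∀ i < N, 0 ≤ r i ∧ r i ≤ q) :
    ∏ i ∈ range N, r i ≤ q ^ N := by
  simpa using prod_le_prod (fun i hi => (hr i (mem_range.1 hi)).1)
    (fun i hi => (hr i (mem_range.1 hi)).2)

lemma sum_pow_le_one_div_one_sub {q : ℝ} (hq0 : 0 ≤ q) (hq1 : q < 1) (N : ℕ) :
    ∑ j ∈ range N, q ^ j ≤ 1 / (1 - q) := by
  have := geom_sum_Ico_le_of_lt_one (m := 0) (n := N) hq0 hq1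
  rwa [← range_eq_Ico, pow_zero] at this

noncomputable def tailLevel (δ : ℝ) (i : ℕ) : ℝ := 2 * δ - 2 * i * δ ^ 3

noncomputable def tailSteps (δ : ℝ) : ℕ := ⌊3 / (4 * δ ^ 2)⌋₊

lemma tailLevel_succ (δ : ℝ) (i : ℕ) : tailLevel δ (i + 1) = tailLevel δ i - 2 * δ ^ 3 := by
  simp only [tailLevel]; push_cast; ring

lemma tailLevel_zero (δ : ℝ) : tailLevel δ 0 = 2 * δ := by simp [tailLevel]

lemma tailLevel_le {δ : ℝ} (hδ : 0 ≤ δ) (i : ℕ) : tailLevel δ i ≤ 2 * δ := by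
  unfold tailLevel; have : 0 ≤ 2 * i * δ ^ 3 := by positivity
  linarith

lemma half_le_tailLevel {δ : ℝ} (hδ : 0 < δ) {i : ℕ} (hi : i ≤ tailSteps δ) :
    δ / 2 ≤ tailLevel δ i := by
  have h : (i : ℝ) ≤ 3 / (4 * δ ^ 2) :=
    (Nat.cast_le.2 hi).trans (Nat.floor_le (by positivity))
  rw [le_div_iff₀ (by positivity)] at h
  unfold tailLevel
  nlinarith

lemma sum_range_succ_tailLevel (δ : ℝ) (n : ℕ) :
    ∑ i ∈ range (n + 1), tailLevel δ i = (n + 1) * (2 * δ - δ ^ 3 * n) := by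
  induction n with
  | zero => simp [tailLevel]
  | succ n ih => rw [sum_range_succ, ih, tailLevel]; push_cast; ring

lemma sum_tailLevel_ge {δ : ℝ} (hδ : 0 < δ) :
    15 / (16 * δ) ≤ ∑ i ∈ range (tailSteps δ + 1), tailLevel δ i := by
  set m := tailSteps δ
  have hm1 : (m : ℝ) ≤ 3 / (4 * δ ^ 2) := Nat.floor_le (by positivity)
  have hm2 : 3 / (4 * δ ^ 2) < m + 1 := Nat.lt_floor_add_one _
  rw [le_div_iff₀ (by positivity)] at hm1
  rw [div_lt_iff₀ (by positivity)] at hm2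
  rw [sum_range_succ_tailLevel, div_le_iff₀ (by positivity)]
  nlinarith [sq_nonneg (4 * δ ^ 2 * m - 3), mul_pos hδ hδ, sq_nonneg (2 * δ ^ 2 * m - 1)]

lemma exp_le_prod_one_add_two_mul_tailLevel {δ : ℝ} (hδ : 0 < δ) (hδ2 : δ ≤ 1 / 2) :
    Real.exp (1 / δ) ≤ ∏ i ∈ range (tailSteps δ + 1), (1 + 2 * tailLevel δ i) := by
  have hlog : 16 / 15 ≤ Real.log 3 := by linarith [Real.log_three_gt_d9]
  -- Bernoulli: `3 ^ x ≤ 1 + 2x` on `[0, 1]`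
  have hfac : ∀ i ∈ range (tailSteps δ + 1),
      Real.exp (Real.log 3 * tailLevel δ i) ≤ 1 + 2 * tailLevel δ i := fun i hi => by
    have h0 := half_le_tailLevel hδ (Nat.lt_succ_iff.1 (mem_range.1 hi))
    have h1 := tailLevel_le hδ.le i
    rw [← Real.rpow_def_of_pos (by norm_num), show (3 : ℝ) = 1 + 2 by norm_num]
    linarith [rpow_one_add_le_one_add_mul_self (by norm_num : (-1 : ℝ) ≤ 2)
      (by linarith : 0 ≤ tailLevel δ i) (by linarith : tailLevel δ i ≤ 1)]
  calc Real.exp (1 / δ) ≤ Real.exp (Real.log 3 * ∑ i ∈ range (tailSteps δ + 1), tailLevel δ i) := by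
        gcongr
        calc 1 / δ = 16 / 15 * (15 / (16 * δ)) := by field_simp
          _ ≤ _ := by gcongr; exact sum_tailLevel_ge hδ
    _ = ∏ i ∈ range (tailSteps δ + 1), Real.exp (Real.log 3 * tailLevel δ i) := by
        rw [mul_sum, Real.exp_sum]
    _ ≤ _ := prod_le_prod (fun i _ => (Real.exp_pos _).le) hfac

lemma prod_one_sub_two_mul_tailLevel_le {δ : ℝ} (hδ : 0 < δ) (hδ4 : δ ≤ 1 / 4) :
    ∏ i ∈ range (tailSteps δ), (1 - 2 * tailLevel δ (i + 1)) ≤ Real.exp (-1 / δ) := by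
  have hsum : 1 / (2 * δ) ≤ ∑ i ∈ range (tailSteps δ), tailLevel δ (i + 1) := by
    have h := sum_tailLevel_ge hδ
    rw [sum_range_succ', tailLevel] at h
    have h7 : 2 * δ ≤ 7 / (16 * δ) := by
      rw [le_div_iff₀ (by positivity)]
      nlinarith
    have hsplit : 15 / (16 * δ) = 1 / (2 * δ) + 7 / (16 * δ) := by field_simp; ring
    push_cast at h
    linarith
  calc ∏ i ∈ range (tailSteps δ), (1 - 2 * tailLevel δ (i + 1))
      ≤ ∏ i ∈ range (tailSteps δ), Real.exp (-(2 * tailLevel δ (i + 1))) := by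
        refine prod_le_prod (fun i hi => ?_) (fun i _ => ?_)
        · linarith [tailLevel_le hδ.le (i + 1)]
        · linarith [Real.add_one_le_exp (-(2 * tailLevel δ (i + 1)))]
    _ = Real.exp (-(2 * ∑ i ∈ range (tailSteps δ), tailLevel δ (i + 1))) := by
        rw [← Real.exp_sum, mul_sum, sum_neg_distrib]
    _ ≤ Real.exp (-1 / δ) := by
        gcongr
        rw [neg_div, neg_le_neg_iff]
        calc 1 / δ = 2 * (1 / (2 * δ)) := by field_simp
          _ ≤ _ := by gcongr

lemma upper_tail_of_recursion {δ A : ℝ} (hδ : 0 < δ) (hδ2 : δ ≤ 1 / 2) (hA : 0 ≤ A)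
    {u : ℕ → ℝ} (hu : u (tailSteps δ + 1) ≤ 1)
    (hrec : ∀ n ≤ tailSteps δ, (1 + 2 * tailLevel δ n) * u n ≤ A + u (n + 1)) :
    u 0 ≤ Real.exp (-1 / δ) + A / δ := by
  set N := tailSteps δ + 1
  set r : ℕ → ℝ := fun n => (1 + 2 * tailLevel δ n)⁻¹
  have hpos : ∀ n < N, 0 < 1 + 2 * tailLevel δ n := fun n hn => by
    linarith [half_le_tailLevel hδ (Nat.lt_succ_iff.1 hn)]
  have hr : ∀ n < N, 0 ≤ r n ∧ r n ≤ (1 + δ)⁻¹ := fun n hn =>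
    ⟨inv_nonneg.2 (hpos n hn).le, inv_anti₀ (by positivity)
      (by linarith [half_le_tailLevel hδ (Nat.lt_succ_iff.1 hn)])⟩
  have hunroll := le_sum_prod_mul_add_prod_mul (f := u) (a := fun n => A * r n) N
    (fun n hn => (hr n hn).1) (fun n hn => by
      show u n ≤ A * (1 + 2 * tailLevel δ n)⁻¹ + (1 + 2 * tailLevel δ n)⁻¹ * u (n + 1)
      rw [mul_comm A, ← mul_add, inv_mul_eq_div, le_div_iff₀ (hpos n hn), mul_comm]
      exact hrec n (Nat.lt_succ_iff.1 hn))
  have hsum : ∑ j ∈ range N, (∏ i ∈ range j, r i) * (A * r j) ≤ A / δ :=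
    calc ∑ j ∈ range N, (∏ i ∈ range j, r i) * (A * r j)
        = A * ∑ j ∈ range N, ∏ i ∈ range (j + 1), r i := by
          rw [mul_sum]; exact sum_congr rfl fun j _ => by rw [prod_range_succ]; ring
      _ ≤ A * ∑ j ∈ range N, (1 + δ)⁻¹ ^ (j + 1) := by
          gcongr with j hj
          exact prod_range_le_pow fun i hi => hr i (by simp at hj; omega)
      _ = A * (1 + δ)⁻¹ * ∑ j ∈ range N, (1 + δ)⁻¹ ^ j := by
          rw [mul_assoc, mul_sum _ _ (1 + δ)⁻¹, mul_sum, mul_sum]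
          exact sum_congr rfl fun j _ => by ring
      _ ≤ A * (1 + δ)⁻¹ * (1 / (1 - (1 + δ)⁻¹)) := by
          gcongr
          exact sum_pow_le_one_div_one_sub (by positivity) (inv_lt_one_of_one_lt₀ (by linarith)) N
      _ = A / δ := by field_simp [hδ.ne']; ring
  have hprod : ∏ i ∈ range N, r i ≤ Real.exp (-1 / δ) := by
    rw [prod_inv_distrib, neg_div, Real.exp_neg]
    exact inv_anti₀ (Real.exp_pos _) (exp_le_prod_one_add_two_mul_tailLevel hδ hδ2)
  calc u 0 ≤ _ := hunroll
    _ ≤ A / δ + Real.exp (-1 / δ) := by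
        gcongr
        exact (mul_le_of_le_one_right (prod_nonneg fun i hi => (hr i (mem_range.1 hi)).1) hu).trans
          hprod
    _ = _ := add_comm _ _

lemma lower_tail_of_recursion {δ A : ℝ} (hδ : 0 < δ) (hδ4 : δ ≤ 1 / 4) (hA : 0 ≤ A)
    {v : ℕ → ℝ} (hv : v (tailSteps δ) ≤ 1)
    (hrec : ∀ n < tailSteps δ, v n ≤ A + (1 - 2 * tailLevel δ (n + 1)) * v (n + 1)) :
    v 0 ≤ Real.exp (-1 / δ) + A / δ := by
  set N := tailSteps δ
  set r : ℕ → ℝ := fun n => 1 - 2 * tailLevel δ (n + 1)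
  have hr : ∀ n < N, 0 ≤ r n ∧ r n ≤ 1 - δ := fun n hn => by
    have h1 := half_le_tailLevel hδ (Nat.succ_le_of_lt hn)
    have h2 := tailLevel_le hδ.le (n + 1)
    constructor <;> simp only [r] <;> linarith
  have hunroll := le_sum_prod_mul_add_prod_mul (f := v) (a := fun _ => A) N
    (fun n hn => (hr n hn).1) hrec
  have hsum : ∑ j ∈ range N, (∏ i ∈ range j, r i) * A ≤ A / δ :=
    calc ∑ j ∈ range N, (∏ i ∈ range j, r i) * A
        = A * ∑ j ∈ range N, ∏ i ∈ range j, r i := by rw [mul_sum]; simp only [mul_comm]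
      _ ≤ A * ∑ j ∈ range N, (1 - δ) ^ j := by
          gcongr with j hj
          exact prod_range_le_pow fun i hi => hr i (by simp at hj; omega)
      _ ≤ A * (1 / (1 - (1 - δ))) := by
          gcongr
          exact sum_pow_le_one_div_one_sub (by linarith) (by linarith) N
      _ = A / δ := by ring_nf
  calc v 0 ≤ _ := hunroll
    _ ≤ A / δ + Real.exp (-1 / δ) := by
        gcongr
        exact (mul_le_of_le_one_right (prod_nonneg fun i hi => (hr i (mem_range.1 hi)).1) hv).trans
          (prod_one_sub_two_mul_tailLevel_le hδ hδ4)
    _ = _ := add_comm _ _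

lemma abs_sub_le_two_mul_tvDist {k : ℕ} (p q : Fin k → ℝ) (c : Fin k) :
    |p c - q c| ≤ 2 * tvDist p q := by
  rw [tvDist, mul_div_cancel₀ _ two_ne_zero]
  exact single_le_sum (f := fun d => |p d - q d|) (fun d _ => abs_nonneg _) (mem_univ c)

lemma IsCoupling.sum_le_sum_indicator_add_sum {α γ : Type*} [Fintype α] [Fintype γ]
    {ν : α × γ → ℝ} {p : α → ℝ} {q : γ → ℝ} (hν : IsCoupling ν p q)
    {E : α → Prop} {F : γ → Prop} [DecidablePred E] [DecidablePred F] {B : Set (α × γ)}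
    (hEF : ∀ x y, E x → (x, y) ∉ B → F y) :
    ∑ x with E x, p x ≤ ∑ z, B.indicator ν z + ∑ y with F y, q y := by
  obtain ⟨hν0, hp, hq⟩ := hν
  calc ∑ x with E x, p x = ∑ z : α × γ, if E z.1 then ν z else 0 := by
        rw [sum_filter, Fintype.sum_prod_type]
        exact sum_congr rfl fun x _ => by split_ifs <;> simp [← hp]
    _ ≤ ∑ z : α × γ, (B.indicator ν z + if F z.2 then ν z else 0) := by
        refine sum_le_sum fun z _ => ?_
        by_cases hB : z ∈ B
        · have := hν0 z
          simp only [Set.indicator_of_mem hB]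
          split_ifs <;> linarith
        · by_cases hE : E z.1
          · simp [hE, hEF z.1 z.2 hE hB, hB]
          · have := hν0 z
            simp only [hE, if_false, Set.indicator_of_notMem hB, zero_add]
            split_ifs <;> linarith
    _ = ∑ z, B.indicator ν z + ∑ y with F y, q y := by
        rw [sum_add_distrib, sum_filter,
          Fintype.sum_prod_type_right fun z : α × γ => if F z.2 then ν z else 0]
        congr 1
        exact sum_congr rfl fun y _ => by split_ifs <;> simp [← hq]

/-! `w c X ≥ 0` is an unnormalised joint law of a colour `c` and a boundary `X`: `posterior w X` is
the law of the colour given `X` (the paper's `μ↑_X`), `likelihood w c` the law of `X` given `c`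
(`μ↓_c`), and `marginalProb` is the probability of an event under the marginal law of `X`. -/

namespace JointWeights

variable {β : Type*} {k : ℕ}

noncomputable def posterior (w : Fin k → β → ℝ) (X : β) (c : Fin k) : ℝ :=
  w c X / ∑ d, w d X

section Posterior

variable {w : Fin k → β → ℝ}

lemma posterior_nonneg (hw : ∀ c X, 0 ≤ w c X) (X : β) (c : Fin k) : 0 ≤ posterior w X c :=
  div_nonneg (hw c X) (sum_nonneg fun d _ => hw d X)

lemma weight_le_sum (hw : ∀ c X, 0 ≤ w c X) (X : β) (c : Fin k) : w c X ≤ ∑ d, w d X :=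
  single_le_sum (f := fun d => w d X) (fun d _ => hw d X) (mem_univ c)

lemma posterior_le_one (hw : ∀ c X, 0 ≤ w c X) (X : β) (c : Fin k) : posterior w X c ≤ 1 :=
  div_le_one_of_le₀ (weight_le_sum hw X c) (sum_nonneg fun d _ => hw d X)

lemma posterior_mul_sum (hw : ∀ c X, 0 ≤ w c X) (X : β) (c : Fin k) :
    posterior w X c * ∑ d, w d X = w c X := by
  rcases (sum_nonneg fun d _ => hw d X).eq_or_lt with h | h
  · rw [← h, mul_zero]
    exact (le_antisymm ((weight_le_sum hw X c).trans h.ge) (hw c X)).symm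
  · exact div_mul_cancel₀ _ h.ne'

end Posterior

variable [Fintype β]

noncomputable def likelihood (w : Fin k → β → ℝ) (c : Fin k) (X : β) : ℝ :=
  w c X / ∑ Y, w c Y

noncomputable def likelihoodProb (w : Fin k → β → ℝ) (c : Fin k) (E : β → Prop)
    [DecidablePred E] : ℝ :=
  ∑ X with E X, likelihood w c X

noncomputable def marginalProb (w : Fin k → β → ℝ) (E : β → Prop) [DecidablePred E] : ℝ :=
  (∑ X with E X, ∑ c, w c X) / ∑ c, ∑ X, w c X

def CouplingCondition (w : Fin k → β → ℝ) (θ A : ℝ) : Prop :=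
  ∀ c₁ c₂ : Fin k, ∃ ν : β × β → ℝ, IsCoupling ν (likelihood w c₁) (likelihood w c₂) ∧
    ∑ q, Set.indicator {q : β × β | θ < tvDist (posterior w q.1) (posterior w q.2)} ν q ≤ A

variable {w : Fin k → β → ℝ} {E F G : β → Prop} [DecidablePred E] [DecidablePred F]
  [DecidablePred G]

lemma likelihood_eq (hunif : ∀ c c', ∑ X, w c X = ∑ X, w c' X) (c : Fin k) (X : β) :
    likelihood w c X = k * w c X / ∑ d, ∑ Y, w d Y := by
  have htotal : ∑ d, ∑ Y, w d Y = k * ∑ Y, w c Y := by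
    simp [fun d => hunif d c]
  rw [likelihood, htotal, mul_div_mul_left _ _ (Nat.cast_ne_zero.2 c.pos.ne')]

lemma likelihoodProb_eq (hw : ∀ c X, 0 ≤ w c X) (hunif : ∀ c c', ∑ X, w c X = ∑ X, w c' X)
    (c : Fin k) : likelihoodProb w c E =
      k * (∑ X with E X, posterior w X c * ∑ d, w d X) / ∑ d, ∑ Y, w d Y := by
  simp only [likelihoodProb, likelihood_eq hunif, posterior_mul_sum hw, mul_sum, sum_div]

lemma sum_likelihoodProb (hunif : ∀ c c', ∑ X, w c X = ∑ X, w c' X) :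
    ∑ c, likelihoodProb w c E = k * marginalProb w E := by
  simp only [likelihoodProb, likelihood_eq hunif, marginalProb, ← sum_div, ← mul_sum, mul_div_assoc]
  rw [sum_comm]

lemma marginalProb_nonneg (hw : ∀ c X, 0 ≤ w c X) : 0 ≤ marginalProb w E :=
  div_nonneg (sum_nonneg fun X _ => sum_nonneg fun c _ => hw c X)
    (sum_nonneg fun c _ => sum_nonneg fun X _ => hw c X)

lemma marginalProb_le_one (hw : ∀ c X, 0 ≤ w c X) : marginalProb w E ≤ 1 := by
  refine div_le_one_of_le₀ ?_ (sum_nonneg fun c _ => sum_nonneg fun X _ => hw c X)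
  exact (sum_le_sum_of_subset_of_nonneg (filter_subset E univ)
    fun X _ _ => sum_nonneg fun c _ => hw c X).trans sum_comm.le

lemma marginalProb_eq_zero (h : ∀ X, ¬ E X) : marginalProb w E = 0 := by
  simp [marginalProb, h]

lemma marginalProb_le_add (hw : ∀ c X, 0 ≤ w c X) (h : ∀ X, E X → F X ∨ G X) :
    marginalProb w E ≤ marginalProb w F + marginalProb w G := by
  rw [marginalProb, marginalProb, marginalProb, ← add_div]
  gcongr
  · exact sum_nonneg fun c _ => sum_nonneg fun X _ => hw c X
  simp only [sum_filter, ← sum_add_distrib]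
  refine sum_le_sum fun X _ => ?_
  have hm : 0 ≤ ∑ c, w c X := sum_nonneg fun c _ => hw c X
  by_cases hE : E X
  · rcases h X hE with hF | hG <;> split_ifs <;> linarith
  · split_ifs <;> linarith

lemma mul_marginalProb_le_likelihoodProb (hw : ∀ c X, 0 ≤ w c X)
    (hunif : ∀ c c', ∑ X, w c X = ∑ X, w c' X) {c : Fin k} {s : ℝ}
    (hE : ∀ X, E X → s ≤ posterior w X c) : k * s * marginalProb w E ≤ likelihoodProb w c E := by
  rw [likelihoodProb_eq hw hunif, marginalProb, ← mul_div_assoc, mul_assoc, mul_sum]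
  gcongr with X hX
  · exact sum_nonneg fun c _ => sum_nonneg fun X _ => hw c X
  · exact sum_nonneg fun d _ => hw d X
  · exact hE X (mem_filter.1 hX).2

lemma likelihoodProb_le_mul_marginalProb (hw : ∀ c X, 0 ≤ w c X)
    (hunif : ∀ c c', ∑ X, w c X = ∑ X, w c' X) {c : Fin k} {t : ℝ}
    (hE : ∀ X, E X → posterior w X c ≤ t) : likelihoodProb w c E ≤ k * t * marginalProb w E := by
  rw [likelihoodProb_eq hw hunif, marginalProb, ← mul_div_assoc, mul_assoc, mul_sum _ _ t]
  gcongr with X hX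
  · exact sum_nonneg fun c _ => sum_nonneg fun X _ => hw c X
  · exact sum_nonneg fun d _ => hw d X
  · exact hE X (mem_filter.1 hX).2

lemma likelihoodProb_le_add_marginalProb (hunif : ∀ c c', ∑ X, w c X = ∑ X, w c' X)
    {c : Fin k} {A : ℝ} (h : ∀ c', likelihoodProb w c E ≤ A + likelihoodProb w c' F) :
    likelihoodProb w c E ≤ A + marginalProb w F := by
  have hk : (0 : ℝ) < k := Nat.cast_pos.2 c.pos
  have hsum := sum_le_sum fun c' (_ : c' ∈ univ) => h c'
  rw [sum_add_distrib, sum_likelihoodProb hunif] at hsum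
  simp only [sum_const, card_univ, Fintype.card_fin, nsmul_eq_mul] at hsum
  nlinarith

lemma marginalProb_le_add_likelihoodProb (hunif : ∀ c c', ∑ X, w c X = ∑ X, w c' X)
    {c : Fin k} {A : ℝ} (h : ∀ c', likelihoodProb w c' E ≤ A + likelihoodProb w c F) :
    marginalProb w E ≤ A + likelihoodProb w c F := by
  have hk : (0 : ℝ) < k := Nat.cast_pos.2 c.pos
  have hsum := sum_le_sum fun c' (_ : c' ∈ univ) => h c'
  rw [sum_likelihoodProb hunif] at hsum
  simp only [sum_const, card_univ, Fintype.card_fin, nsmul_eq_mul] at hsum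
  nlinarith

lemma CouplingCondition.likelihoodProb_le {θ A : ℝ} (hcoup : CouplingCondition w θ A)
    (c₁ c₂ : Fin k) (hEF : ∀ X Y, E X → tvDist (posterior w X) (posterior w Y) ≤ θ → F Y) :
    likelihoodProb w c₁ E ≤ A + likelihoodProb w c₂ F := by
  obtain ⟨ν, hν, hbad⟩ := hcoup c₁ c₂
  exact (hν.sum_le_sum_indicator_add_sum fun X Y hX hXY => hEF X Y hX (not_lt.1 hXY)).trans
    (add_le_add hbad le_rfl)

lemma mul_marginalProb_lt_posterior_le_add (hw : ∀ c X, 0 ≤ w c X)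
    (hunif : ∀ c c', ∑ X, w c X = ∑ X, w c' X) {θ A : ℝ} (hcoup : CouplingCondition w θ A)
    (c : Fin k) (s : ℝ) :
    k * s * marginalProb w (fun X => s < posterior w X c) ≤
      A + marginalProb w (fun X => s - 2 * θ < posterior w X c) :=
  (mul_marginalProb_le_likelihoodProb hw hunif fun X hX => hX.le).trans
    (likelihoodProb_le_add_marginalProb hunif fun c' =>
      hcoup.likelihoodProb_le c c' fun X Y hX hXY => by
        have := abs_le.1 (abs_sub_le_two_mul_tvDist (posterior w X) (posterior w Y) c)
        linarith)

lemma marginalProb_posterior_lt_le_add (hw : ∀ c X, 0 ≤ w c X)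
    (hunif : ∀ c c', ∑ X, w c X = ∑ X, w c' X) {θ A : ℝ} (hcoup : CouplingCondition w θ A)
    (c : Fin k) (t : ℝ) :
    marginalProb w (fun X => posterior w X c < t) ≤
      A + k * (t + 2 * θ) * marginalProb w (fun X => posterior w X c < t + 2 * θ) :=
  (marginalProb_le_add_likelihoodProb hunif fun c' =>
      hcoup.likelihoodProb_le c' c fun X Y hX hXY => by
        have := abs_le.1 (abs_sub_le_two_mul_tvDist (posterior w X) (posterior w Y) c)
        show posterior w Y c < t + 2 * θ
        linarith).trans
    (add_le_add_right (likelihoodProb_le_mul_marginalProb hw hunif fun X hX => hX.le) A)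

lemma marginalProb_lt_posterior_le (hk : 2 ≤ k) (hw : ∀ c X, 0 ≤ w c X)
    (hunif : ∀ c c', ∑ X, w c X = ∑ X, w c' X) {δ A : ℝ} (hδ : 0 < δ) (hA : 0 ≤ A)
    (hcoup : CouplingCondition w (δ ^ 3) A) (c : Fin k) :
    marginalProb w (fun X => 1 / k + 2 * δ < posterior w X c) ≤
      Real.exp (-1 / δ) + A / δ := by
  have hk' : (2 : ℝ) ≤ k := by exact_mod_cast hk
  rcases le_or_gt δ (1 / 2) with hδ2 | hδ2
  swap
  · have hempty : ∀ X, ¬ (1 / k + 2 * δ < posterior w X c) := fun X hX => by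
      linarith [posterior_le_one hw X c, one_div_pos.2 (by linarith : (0 : ℝ) < k)]
    rw [marginalProb_eq_zero hempty]
    positivity
  rw [← tailLevel_zero δ]
  refine upper_tail_of_recursion
    (u := fun n => marginalProb w (fun X => 1 / k + tailLevel δ n < posterior w X c))
    hδ hδ2 hA (marginalProb_le_one hw) fun n hn => ?_
  have hstep := mul_marginalProb_lt_posterior_le_add hw hunif hcoup c (1 / k + tailLevel δ n)
  rw [add_sub_assoc, ← tailLevel_succ] at hstep
  refine le_trans (mul_le_mul_of_nonneg_right ?_ (marginalProb_nonneg hw)) hstep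
  rw [mul_add, mul_one_div_cancel (by linarith)]
  nlinarith [half_le_tailLevel hδ hn]

lemma marginalProb_posterior_lt_le (hk : 2 ≤ k) (hw : ∀ c X, 0 ≤ w c X)
    (hunif : ∀ c c', ∑ X, w c X = ∑ X, w c' X) {δ A : ℝ} (hδ : 0 < δ) (hA : 0 ≤ A)
    (hcoup : CouplingCondition w (δ ^ 3) A) (c : Fin k) :
    marginalProb w (fun X => posterior w X c < 1 / k - 2 * δ) ≤
      Real.exp (-1 / δ) + A / δ := by
  have hk' : (2 : ℝ) ≤ k := by exact_mod_cast hk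
  rcases le_or_gt δ (1 / 4) with hδ4 | hδ4
  swap
  · have : 1 / (k : ℝ) ≤ 1 / 2 := one_div_le_one_div_of_le two_pos hk'
    have hempty : ∀ X, ¬ (posterior w X c < 1 / k - 2 * δ) := fun X hX => by
      linarith [posterior_nonneg hw X c]
    rw [marginalProb_eq_zero hempty]
    positivity
  rw [← tailLevel_zero δ]
  refine lower_tail_of_recursion
    (v := fun n => marginalProb w (fun X => posterior w X c < 1 / k - tailLevel δ n))
    hδ hδ4 hA (marginalProb_le_one hw) fun n hn => ?_
  have hstep := marginalProb_posterior_lt_le_add hw hunif hcoup c (1 / k - tailLevel δ n)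
  rw [sub_add, ← tailLevel_succ] at hstep
  refine hstep.trans (add_le_add_right (mul_le_mul_of_nonneg_right ?_ (marginalProb_nonneg hw)) A)
  rw [mul_sub, mul_one_div_cancel (by linarith)]
  nlinarith [half_le_tailLevel hδ (Nat.succ_le_of_lt hn)]

theorem marginalProb_far_from_uniform_le (hk : 2 ≤ k) (hw : ∀ c X, 0 ≤ w c X)
    (hunif : ∀ c c', ∑ X, w c X = ∑ X, w c' X) {δ A : ℝ} (hδ : 0 < δ) (hA : 0 ≤ A)
    (hcoup : CouplingCondition w (δ ^ 3) A) (c : Fin k) :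
    marginalProb w (fun X => 2 * δ < |posterior w X c - 1 / k|) ≤
      2 * (Real.exp (-1 / δ) + A / δ) := by
  have hsplit := marginalProb_le_add (w := w) (E := fun X => 2 * δ < |posterior w X c - 1 / k|)
    (F := fun X => 1 / k + 2 * δ < posterior w X c)
    (G := fun X => posterior w X c < 1 / k - 2 * δ) hw fun X hX => by
      rcases lt_abs.1 hX with h | h
      · left; linarith
      · right; linarith
  linarith [marginalProb_lt_posterior_le hk hw hunif hδ hA hcoup c,
    marginalProb_posterior_lt_le hk hw hunif hδ hA hcoup c]

end JointWeights

lemma Nat.card_subtype_eq_sum_card_and_eq {α γ : Type*} [Finite α] [Fintype γ] (p : α → Prop)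
    (f : α → γ) : Nat.card {a // p a} = ∑ b, Nat.card {a // p a ∧ f a = b} := by
  classical
  have := Fintype.ofFinite α
  simp only [Nat.card_eq_fintype_card, Fintype.card_subtype]
  rw [card_eq_sum_card_fiberwise (f := f) (t := univ) fun _ _ => mem_univ _]
  simp only [filter_filter]

open JointWeights

section TreeColorings

variable {Δ ℓ k : ℕ}

noncomputable def rootLeafWeight (Δ ℓ k : ℕ) (c : Fin k) (X : (Fin ℓ → Fin Δ) → Fin k) : ℝ :=
  Nat.card {σ : TVertex Δ ℓ → Fin k //
    ProperColoring Δ ℓ k σ ∧ σ (troot Δ ℓ) = c ∧ leafColoring σ = X}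

lemma rootLeafWeight_nonneg (c : Fin k) (X : (Fin ℓ → Fin Δ) → Fin k) :
    0 ≤ rootLeafWeight Δ ℓ k c X :=
  Nat.cast_nonneg _

lemma card_properColoring_leaf (X : (Fin ℓ → Fin Δ) → Fin k) :
    (Nat.card {σ : TVertex Δ ℓ → Fin k // ProperColoring Δ ℓ k σ ∧ leafColoring σ = X} : ℝ) =
      ∑ c, rootLeafWeight Δ ℓ k c X := by
  rw [Nat.card_subtype_eq_sum_card_and_eq _ fun σ => σ (troot Δ ℓ), Nat.cast_sum]
  exact sum_congr rfl fun c _ =>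
    congrArg _ (Nat.card_congr (Equiv.subtypeEquivRight fun σ => by tauto))

lemma card_properColoring_root (c : Fin k) :
    (Nat.card {σ : TVertex Δ ℓ → Fin k // ProperColoring Δ ℓ k σ ∧ σ (troot Δ ℓ) = c} : ℝ) =
      ∑ X, rootLeafWeight Δ ℓ k c X := by
  rw [Nat.card_subtype_eq_sum_card_and_eq _ leafColoring, Nat.cast_sum]
  simp only [and_assoc, rootLeafWeight]

lemma properColoring_comp_iff (π : Equiv.Perm (Fin k)) (σ : TVertex Δ ℓ → Fin k) :
    ProperColoring Δ ℓ k (π ∘ σ) ↔ ProperColoring Δ ℓ k σ := by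
  simp [ProperColoring]

lemma sum_rootLeafWeight_eq (c c' : Fin k) :
    ∑ X, rootLeafWeight Δ ℓ k c X = ∑ X, rootLeafWeight Δ ℓ k c' X := by
  rw [← card_properColoring_root, ← card_properColoring_root]
  refine congrArg _ (Nat.card_congr (Equiv.subtypeEquiv
    ((Equiv.refl _).arrowCongr (Equiv.swap c c')) fun σ => ?_))
  show _ ↔ ProperColoring Δ ℓ k (Equiv.swap c c' ∘ σ) ∧ Equiv.swap c c' (σ (troot Δ ℓ)) = c'
  rw [properColoring_comp_iff, Equiv.swap_apply_eq_iff, Equiv.swap_apply_right]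

lemma agreesOn_toPartial_iff (σ : TVertex Δ ℓ → Fin k) (X : (Fin ℓ → Fin Δ) → Fin k) :
    AgreesOn σ (toPartial X) ↔ leafColoring σ = X := by
  refine ⟨fun h => funext fun f => h f (X f) rfl, ?_⟩
  rintro rfl f c hc
  exact Option.some_inj.1 hc

lemma upDist_eq_posterior : upDist Δ ℓ k = posterior (rootLeafWeight Δ ℓ k) := by
  funext X c
  simp only [upDist, condProbRootP, posterior, agreesOn_toPartial_iff, ← card_properColoring_leaf]
  congr 2
  exact Nat.card_congr (Equiv.subtypeEquivRight fun σ => by tauto)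

lemma downDist_eq_likelihood : downDist Δ ℓ k = likelihood (rootLeafWeight Δ ℓ k) := by
  funext c X
  rw [downDist, likelihood, ← card_properColoring_root]
  rfl

lemma treeProb_leafColoring_eq_marginalProb (E : ((Fin ℓ → Fin Δ) → Fin k) → Prop)
    [DecidablePred E] :
    treeProb Δ ℓ k (fun σ => E (leafColoring σ)) = marginalProb (rootLeafWeight Δ ℓ k) E := by
  have hE : (Nat.card {σ : TVertex Δ ℓ → Fin k //
      ProperColoring Δ ℓ k σ ∧ E (leafColoring σ)} : ℝ) =
      ∑ X with E X, ∑ c, rootLeafWeight Δ ℓ k c X := by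
    rw [Nat.card_subtype_eq_sum_card_and_eq _ leafColoring, Nat.cast_sum, sum_filter]
    refine sum_congr rfl fun X _ => ?_
    split_ifs with hX
    · rw [← card_properColoring_leaf]
      exact congrArg _ (Nat.card_congr (Equiv.subtypeEquivRight fun σ =>
        ⟨fun h => ⟨h.1.1, h.2⟩, fun h => ⟨⟨h.1, h.2 ▸ hX⟩, h.2⟩⟩))
    · simp only [Nat.cast_eq_zero, Nat.card_eq_zero]
      exact Or.inl ⟨fun ⟨σ, ⟨_, hσ⟩, hσX⟩ => hX (hσX ▸ hσ)⟩
  have hall : (Nat.card {σ : TVertex Δ ℓ → Fin k // ProperColoring Δ ℓ k σ} : ℝ) =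
      ∑ c, ∑ X, rootLeafWeight Δ ℓ k c X := by
    rw [Nat.card_subtype_eq_sum_card_and_eq _ leafColoring, Nat.cast_sum, sum_comm]
    exact sum_congr rfl fun X _ => card_properColoring_leaf X
  rw [treeProb, marginalProb, hE, hall]

end TreeColorings

theorem coupling_to_concentration_general (Δ k : ℕ) (hk : 2 ≤ k) (ℓ : ℕ)
    (δ A : ℝ) (hδ : 0 < δ) (hA : 0 ≤ A)
    (hcoup : ∀ c₁ c₂ : Fin k,
      ∃ ν : ((Fin ℓ → Fin Δ) → Fin k) × ((Fin ℓ → Fin Δ) → Fin k) → ℝ,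
        IsCoupling ν (downDist Δ ℓ k c₁) (downDist Δ ℓ k c₂) ∧
        (∑ q : ((Fin ℓ → Fin Δ) → Fin k) × ((Fin ℓ → Fin Δ) → Fin k),
          Set.indicator {q : ((Fin ℓ → Fin Δ) → Fin k) × ((Fin ℓ → Fin Δ) → Fin k) |
              δ ^ 3 < tvDist (upDist Δ ℓ k q.1) (upDist Δ ℓ k q.2)} ν q) ≤ A) :
    ∀ c : Fin k,
      treeProb Δ ℓ k (fun σ => 2 * δ < |upDist Δ ℓ k (leafColoring σ) c - 1 / (k : ℝ)|) ≤
        2 * (Real.exp (-1 / δ) + A / δ) := by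
  intro c
  rw [upDist_eq_posterior, downDist_eq_likelihood] at hcoup
  rw [treeProb_leafColoring_eq_marginalProb
    (fun X => 2 * δ < |upDist Δ ℓ k X c - 1 / (k : ℝ)|), upDist_eq_posterior]
  exact marginalProb_far_from_uniform_le hk rootLeafWeight_nonneg sum_rootLeafWeight_eq hδ hA
    hcoup c

/-- Lemma 18 of the paper, from Martinelli-Sinclair-Weitz: a tail
bound on the `μ↑` total variation distance in couplings of the `μ↓` distributions implies
concentration of the root bias over a random boundary. -/
theorem coupling_to_concentration (Δ k : ℕ) (hΔ : 2 ≤ Δ) (hk : 2 ≤ k) (ℓ : ℕ)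
    (δ A : ℝ) (hδ : 0 < δ) (hA : 0 ≤ A)
    (hcoup : ∀ c₁ c₂ : Fin k,
      ∃ ν : ((Fin ℓ → Fin Δ) → Fin k) × ((Fin ℓ → Fin Δ) → Fin k) → ℝ,
        IsCoupling ν (downDist Δ ℓ k c₁) (downDist Δ ℓ k c₂) ∧
        (∑ q : ((Fin ℓ → Fin Δ) → Fin k) × ((Fin ℓ → Fin Δ) → Fin k),
          Set.indicator {q : ((Fin ℓ → Fin Δ) → Fin k) × ((Fin ℓ → Fin Δ) → Fin k) |
              δ ^ 3 < tvDist (upDist Δ ℓ k q.1) (upDist Δ ℓ k q.2)} ν q) ≤ A) :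
    ∀ c : Fin k,
      treeProb Δ ℓ k (fun σ => 2 * δ < |upDist Δ ℓ k (leafColoring σ) c - 1 / (k : ℝ)|) ≤
        2 * (Real.exp (-1 / δ) + A / δ) :=
  coupling_to_concentration_general Δ k hk ℓ δ A hδ hA hcoup
end
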